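/- arXiv:2003.05890 — 8 statements merged into one kernel-verified Lean document; each statement's English description precedes it below -/
import Mathlib

section
/- (Lemma 3.4, 'Q-Lemma') A (c,c)-dimensional framed representation (A₁,A₂;B₁,…,B_{n−1};D₂,…,D_n;e;f₁,…,f_{n−1}) of Λ'_n is θ_c-semistable if and only if it satisfies both of the following conditions: (Q2') for every subrepresentation (S₀,S₁) with S₀ ⊆ ker e one has dim S₀ ≤ dim S₁, and if dim S₀ = dim S₁ then S₀ = 0 and S₁ = 0; (Q3') for every subrepresentation (S₀,S₁) with Im f_q ⊆ S₀ for all q = 1,…,n−1 one has dim S₀ ≤ dim S₁. -/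
open Module

/-
The semistability weight of a subrepresentation is `2c·a + (1 - 2c)·b = 2c·(a - b) + b` with
`a = dim S₀`, `b = dim S₁ ≤ c`. Since `0 ≤ b ≤ c`, the sign of `a - b` decides everything:
if `a < b` the weight is at most `-c`, if `a = b` it equals `b`, and if `a > b` it exceeds `c`.
-/

theorem theta_weight_nonpos_iff {a b c : ℕ} (hc : 1 ≤ c) (hb : b ≤ c) :
    (2 * c : ℤ) * a + (1 - 2 * c) * b ≤ 0 ↔ a ≤ b ∧ (a = b → a = 0 ∧ b = 0) := by
  rcases lt_trichotomy a b with hab | rfl | hab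
  · have : (a : ℤ) + 1 ≤ b := by exact_mod_cast hab
    simp only [hab.le, hab.ne, false_imp_iff, and_true, iff_true]
    nlinarith
  · simp only [le_rfl, true_imp_iff, true_and, and_self]
    constructor <;> intro h <;> nlinarith
  · have : (b : ℤ) + 1 ≤ a := by exact_mod_cast hab
    simp only [not_le.2 hab, false_and, iff_false, not_le]
    nlinarith

theorem theta_weight_le_iff {a b c : ℕ} (hc : 1 ≤ c) (hb : b ≤ c) :
    (2 * c : ℤ) * a + (1 - 2 * c) * b ≤ c ↔ a ≤ b := by
  constructor
  · intro h
    by_contra! hab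
    have : (b : ℤ) + 1 ≤ a := by exact_mod_cast hab
    nlinarith
  · intro hab
    have : (a : ℤ) ≤ b := by exact_mod_cast hab
    nlinarith

theorem theta_weight_nonpos_iff_submodule {K M N : Type*} [DivisionRing K]
    [AddCommGroup M] [Module K M] [FiniteDimensional K M]
    [AddCommGroup N] [Module K N] [FiniteDimensional K N]
    {c : ℕ} (hc : 1 ≤ c) (S₀ : Submodule K M) (S₁ : Submodule K N) (hS₁ : finrank K S₁ ≤ c) :
    (2 * c : ℤ) * finrank K S₀ + (1 - 2 * c) * finrank K S₁ ≤ 0 ↔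
      finrank K S₀ ≤ finrank K S₁ ∧ (finrank K S₀ = finrank K S₁ → S₀ = ⊥ ∧ S₁ = ⊥) := by
  rw [theta_weight_nonpos_iff hc hS₁, Submodule.finrank_eq_zero, Submodule.finrank_eq_zero]

theorem stmt_0_general (n c : ℕ) (hc : 1 ≤ c)
    (V₀ V₁ W : Type) [AddCommGroup V₀] [Module ℂ V₀] [FiniteDimensional ℂ V₀]
    [AddCommGroup V₁] [Module ℂ V₁] [FiniteDimensional ℂ V₁]
    [AddCommGroup W] [Module ℂ W]
    (hV₁ : finrank ℂ V₁ = c)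
    (A₁ A₂ : V₀ →ₗ[ℂ] V₁)
    (B D : Fin (n - 1) → (V₁ →ₗ[ℂ] V₀))
    (e : V₀ →ₗ[ℂ] W) (f : Fin (n - 1) → (W →ₗ[ℂ] V₀)) :
    -- θ_c-semistability
    (∀ (S₀ : Submodule ℂ V₀) (S₁ : Submodule ℂ V₁),
      S₀.map A₁ ≤ S₁ → S₀.map A₂ ≤ S₁ →
      (∀ q, S₁.map (B q) ≤ S₀) → (∀ q, S₁.map (D q) ≤ S₀) →
      ((S₀ ≤ LinearMap.ker e →
          (2 * c : ℤ) * (finrank ℂ S₀ : ℤ) + (1 - 2 * c) * (finrank ℂ S₁ : ℤ) ≤ 0) ∧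
       ((∀ q, LinearMap.range (f q) ≤ S₀) →
          (2 * c : ℤ) * (finrank ℂ S₀ : ℤ) + (1 - 2 * c) * (finrank ℂ S₁ : ℤ) ≤ c)))
    ↔
    -- (Q2')
    ((∀ (S₀ : Submodule ℂ V₀) (S₁ : Submodule ℂ V₁),
      S₀.map A₁ ≤ S₁ → S₀.map A₂ ≤ S₁ →
      (∀ q, S₁.map (B q) ≤ S₀) → (∀ q, S₁.map (D q) ≤ S₀) →
      S₀ ≤ LinearMap.ker e →
      finrank ℂ S₀ ≤ finrank ℂ S₁ ∧
        (finrank ℂ S₀ = finrank ℂ S₁ → S₀ = ⊥ ∧ S₁ = ⊥)) ∧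
    -- (Q3')
    (∀ (S₀ : Submodule ℂ V₀) (S₁ : Submodule ℂ V₁),
      S₀.map A₁ ≤ S₁ → S₀.map A₂ ≤ S₁ →
      (∀ q, S₁.map (B q) ≤ S₀) → (∀ q, S₁.map (D q) ≤ S₀) →
      (∀ q, LinearMap.range (f q) ≤ S₀) →
      finrank ℂ S₀ ≤ finrank ℂ S₁)) := by
  have hS₁ (S₁ : Submodule ℂ V₁) : finrank ℂ S₁ ≤ c := hV₁ ▸ S₁.finrank_le
  constructor
  · intro hss
    exact ⟨fun S₀ S₁ h₁ h₂ h₃ h₄ he =>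
        (theta_weight_nonpos_iff_submodule hc S₀ S₁ (hS₁ S₁)).1 ((hss S₀ S₁ h₁ h₂ h₃ h₄).1 he),
      fun S₀ S₁ h₁ h₂ h₃ h₄ hf =>
        (theta_weight_le_iff hc (hS₁ S₁)).1 ((hss S₀ S₁ h₁ h₂ h₃ h₄).2 hf)⟩
  · rintro ⟨hQ2, hQ3⟩ S₀ S₁ h₁ h₂ h₃ h₄
    exact ⟨fun he => (theta_weight_nonpos_iff_submodule hc S₀ S₁ (hS₁ S₁)).2
        (hQ2 S₀ S₁ h₁ h₂ h₃ h₄ he),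
      fun hf => (theta_weight_le_iff hc (hS₁ S₁)).2 (hQ3 S₀ S₁ h₁ h₂ h₃ h₄ hf)⟩

/-- (Lemma 3.4, 'Q-Lemma') A (c,c)-dimensional framed representation of Λ'_n is
θ_c-semistable if and only if it satisfies conditions (Q2') and (Q3'). -/
theorem stmt_0 (n c : ℕ) (hn : 2 ≤ n) (hc : 1 ≤ c)
    (V₀ V₁ W : Type) [AddCommGroup V₀] [Module ℂ V₀] [FiniteDimensional ℂ V₀]
    [AddCommGroup V₁] [Module ℂ V₁] [FiniteDimensional ℂ V₁]
    [AddCommGroup W] [Module ℂ W] [FiniteDimensional ℂ W]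
    (hV₀ : finrank ℂ V₀ = c) (hV₁ : finrank ℂ V₁ = c) (hW : finrank ℂ W = 1)
    (A₁ A₂ : V₀ →ₗ[ℂ] V₁)
    (B D : Fin (n - 1) → (V₁ →ₗ[ℂ] V₀))
    (e : V₀ →ₗ[ℂ] W) (f : Fin (n - 1) → (W →ₗ[ℂ] V₀))
    (hQ1'a : ∀ q, A₂ ∘ₗ D q = A₁ ∘ₗ B q)
    (hQ1'b : ∀ q, D q ∘ₗ A₂ = B q ∘ₗ A₁ + f q ∘ₗ e) :
    -- θ_c-semistability
    (∀ (S₀ : Submodule ℂ V₀) (S₁ : Submodule ℂ V₁),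
      S₀.map A₁ ≤ S₁ → S₀.map A₂ ≤ S₁ →
      (∀ q, S₁.map (B q) ≤ S₀) → (∀ q, S₁.map (D q) ≤ S₀) →
      ((S₀ ≤ LinearMap.ker e →
          (2 * c : ℤ) * (finrank ℂ S₀ : ℤ) + (1 - 2 * c) * (finrank ℂ S₁ : ℤ) ≤ 0) ∧
       ((∀ q, LinearMap.range (f q) ≤ S₀) →
          (2 * c : ℤ) * (finrank ℂ S₀ : ℤ) + (1 - 2 * c) * (finrank ℂ S₁ : ℤ) ≤ c)))
    ↔
    -- (Q2')
    ((∀ (S₀ : Submodule ℂ V₀) (S₁ : Submodule ℂ V₁),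
      S₀.map A₁ ≤ S₁ → S₀.map A₂ ≤ S₁ →
      (∀ q, S₁.map (B q) ≤ S₀) → (∀ q, S₁.map (D q) ≤ S₀) →
      S₀ ≤ LinearMap.ker e →
      finrank ℂ S₀ ≤ finrank ℂ S₁ ∧
        (finrank ℂ S₀ = finrank ℂ S₁ → S₀ = ⊥ ∧ S₁ = ⊥)) ∧
    -- (Q3')
    (∀ (S₀ : Submodule ℂ V₀) (S₁ : Submodule ℂ V₁),
      S₀.map A₁ ≤ S₁ → S₀.map A₂ ≤ S₁ →
      (∀ q, S₁.map (B q) ≤ S₀) → (∀ q, S₁.map (D q) ≤ S₀) →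
      (∀ q, LinearMap.range (f q) ≤ S₀) →
      finrank ℂ S₀ ≤ finrank ℂ S₁)) :=
  stmt_0_general n c hc V₀ V₁ W hV₁ A₁ A₂ B D e f
end

section
/- (Proposition 3.5) For every θ_c-semistable (c,c)-dimensional framed representation (A₁,A₂;B₁,…,B_{n−1};D₂,…,D_n;e;f₁,…,f_{n−1}) of Λ'_n, the associated matrix pencil A₁ + λA₂ is regular, i.e., there exist ν₁, ν₂ ∈ ℂ such that the linear map ν₁A₁ + ν₂A₂ : V₀ → V₁ is bijective. -/
/-!
If the pencil were singular, `det (A₁ - λ A₂)` would vanish identically, so `A₁ - λ A₂` would have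
a nonzero polynomial kernel vector `v(λ) = ∑ wᵢ λⁱ`. Let `U` be the span of the coefficients of all
such vectors; then `A₁ U ⊆ A₂ U`.

If `e` vanishes on `U`, then `B_q A₂` maps polynomial kernel vectors to polynomial kernel vectors,
so `(U, A₂ U)` is a subrepresentation inside `ker e`; since `dim A₂ U ≤ dim U` and `U ≠ 0`, it
violates (i).

Otherwise `v(τ)` lies in `ker (A₁ - τ A₂)` but not in `ker e` for some `v` and `τ`. The relations
(Q1') are preserved when the pencil `(A₁, A₂)` is replaced by `(A₂, A₁ - τ A₂)` and `(B, D)` by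
`(τ B - D, -B)`. Let `S` be the largest subspace with `A₂ S ⊆ (A₁ - τ A₂) S`; it contains `U`.
Because `W` is spanned by `e (v τ)`, the subspace `S` is closed under the `B_q`, `D_q` and `f_q`.
Since `A₁ - τ A₂` kills `v(τ) ∈ S`, the image of `S` has smaller dimension, and this violates (ii).
-/

open Module Polynomial Finset Matrix

section Pencil

variable {K V₀ V₁ : Type*} [Field K] [AddCommGroup V₀] [Module K V₀] [AddCommGroup V₁] [Module K V₁]

theorem Submodule.finrank_map_lt_of_mem_ker [FiniteDimensional K V₀] {A : V₀ →ₗ[K] V₁}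
    {S : Submodule K V₀} {u : V₀} (hu : u ∈ S) (hu0 : u ≠ 0) (hAu : A u = 0) :
    finrank K (S.map A) < finrank K S := by
  have hrank := (A.domRestrict S).finrank_range_add_finrank_ker
  rw [LinearMap.range_domRestrict] at hrank
  have hker : LinearMap.ker (A.domRestrict S) ≠ ⊥ :=
    (Submodule.ne_bot_iff _).2 ⟨⟨u, hu⟩, by simpa using hAu, by simpa using hu0⟩
  have := Submodule.finrank_eq_zero.not.2 hker
  omega

variable (A₁ A₂ : V₀ →ₗ[K] V₁)

def maxSubmoduleMapLe : Submodule K V₀ := sSup {S | S.map A₁ ≤ S.map A₂}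

variable {A₁ A₂} in
theorem le_maxSubmoduleMapLe {S : Submodule K V₀} (h : S.map A₁ ≤ S.map A₂) :
    S ≤ maxSubmoduleMapLe A₁ A₂ :=
  le_sSup h

theorem map_maxSubmoduleMapLe_le :
    (maxSubmoduleMapLe A₁ A₂).map A₁ ≤ (maxSubmoduleMapLe A₁ A₂).map A₂ := by
  rw [maxSubmoduleMapLe, sSup_eq_iSup', Submodule.map_iSup, Submodule.map_iSup]
  exact iSup_mono fun S => S.2

/-- `w` is the coefficient sequence of a polynomial solution `v(λ) = ∑ wᵢ λⁱ` of
`(A₁ - λ A₂) v(λ) = 0`. -/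
structure IsPencilChain (w : ℕ → V₀) : Prop where
  eventually_zero : ∃ N, ∀ i ≥ N, w i = 0
  apply_zero : A₁ (w 0) = 0
  apply_succ : ∀ i, A₁ (w (i + 1)) = A₂ (w i)

def chainSpace : Submodule K V₀ :=
  Submodule.span K {x | ∃ w, IsPencilChain A₁ A₂ w ∧ x ∈ Set.range w}

variable {A₁ A₂}

theorem IsPencilChain.mem_chainSpace {w : ℕ → V₀} (hw : IsPencilChain A₁ A₂ w) (i : ℕ) :
    w i ∈ chainSpace A₁ A₂ :=
  Submodule.subset_span ⟨w, hw, i, rfl⟩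

theorem map_chainSpace_le_iff {M : Type*} [AddCommGroup M] [Module K M] (g : V₀ →ₗ[K] M)
    (N : Submodule K M) :
    (chainSpace A₁ A₂).map g ≤ N ↔ ∀ w, IsPencilChain A₁ A₂ w → ∀ i, g (w i) ∈ N := by
  rw [chainSpace, Submodule.map_span_le]
  exact ⟨fun h w hw i => h _ ⟨w, hw, i, rfl⟩, fun h _ ⟨w, hw, i, hi⟩ => hi ▸ h w hw i⟩

theorem chainSpace_le_ker_iff {M : Type*} [AddCommGroup M] [Module K M] (g : V₀ →ₗ[K] M) :
    chainSpace A₁ A₂ ≤ LinearMap.ker g ↔ ∀ w, IsPencilChain A₁ A₂ w → ∀ i, g (w i) = 0 := by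
  simp [LinearMap.le_ker_iff_map, ← le_bot_iff, map_chainSpace_le_iff]

theorem map_chainSpace_le : (chainSpace A₁ A₂).map A₁ ≤ (chainSpace A₁ A₂).map A₂ := by
  refine (map_chainSpace_le_iff _ _).2 fun w hw i => ?_
  cases i with
  | zero => simp [hw.apply_zero]
  | succ i => exact hw.apply_succ i ▸ Submodule.mem_map_of_mem (hw.mem_chainSpace i)

theorem IsPencilChain.apply_mem_map_sub_smul {w : ℕ → V₀} (hw : IsPencilChain A₁ A₂ w) (τ : K)
    (i : ℕ) : A₂ (w i) ∈ (chainSpace A₁ A₂).map (A₁ - τ • A₂) := by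
  obtain ⟨N, hN⟩ := hw.eventually_zero
  suffices ∀ k i, N ≤ i + k → A₂ (w i) ∈ (chainSpace A₁ A₂).map (A₁ - τ • A₂) from
    this N i (by omega)
  intro k
  induction k with
  | zero => intro i hi; simp [hN i (by omega)]
  | succ k ih =>
    intro i hi
    have hstep : A₂ (w i) = (A₁ - τ • A₂) (w (i + 1)) + τ • A₂ (w (i + 1)) := by
      simp [hw.apply_succ]
    rw [hstep]
    exact add_mem (Submodule.mem_map_of_mem (hw.mem_chainSpace (i + 1)))
      (Submodule.smul_mem _ τ (ih (i + 1) (by omega)))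

theorem map_chainSpace_le_map_sub_smul (τ : K) :
    (chainSpace A₁ A₂).map A₂ ≤ (chainSpace A₁ A₂).map (A₁ - τ • A₂) :=
  (map_chainSpace_le_iff _ _).2 fun _ hw => hw.apply_mem_map_sub_smul τ

theorem IsPencilChain.sub_smul_apply_sum_eq_zero {w : ℕ → V₀} (hw : IsPencilChain A₁ A₂ w) {N : ℕ}
    (hN : ∀ i ≥ N, w i = 0) (τ : K) : (A₁ - τ • A₂) (∑ i ∈ range N, τ ^ i • w i) = 0 := by
  rcases N with _ | N
  · simp
  have h₁ : A₁ (∑ i ∈ range (N + 1), τ ^ i • w i) = ∑ i ∈ range N, τ ^ (i + 1) • A₂ (w i) := by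
    simp [Finset.sum_range_succ', hw.apply_succ, hw.apply_zero]
  have h₂ : τ • A₂ (∑ i ∈ range (N + 1), τ ^ i • w i) = ∑ i ∈ range N, τ ^ (i + 1) • A₂ (w i) := by
    simp [Finset.sum_range_succ, ← hw.apply_succ N, hN (N + 1) le_rfl, Finset.smul_sum, smul_smul,
      pow_succ']
  rw [LinearMap.sub_apply, LinearMap.smul_apply, h₁, h₂, sub_self]

theorem exists_sum_pow_smul_ne_zero [Infinite K] (x : ℕ → V₀) {N i₀ : ℕ} (hi₀ : i₀ < N)
    (hx : x i₀ ≠ 0) : ∃ τ : K, ∑ i ∈ range N, τ ^ i • x i ≠ 0 := by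
  obtain ⟨φ, hφ⟩ := Projective.exists_dual_ne_zero K hx
  by_contra! h
  have hp : ∑ i ∈ range N, C (φ (x i)) * X ^ i = 0 := Polynomial.funext fun τ => by
    have := congrArg φ (h τ)
    simp only [map_sum, map_smul, smul_eq_mul, map_zero] at this
    rw [eval_finsetSum, eval_zero, ← this]
    exact Finset.sum_congr rfl fun i _ => by rw [eval_mul, eval_C, eval_pow, eval_X, mul_comm]
  apply hφ
  simpa [Polynomial.finsetSum_coeff, Polynomial.coeff_C_mul_X_pow, hi₀] using
    congrArg (coeff · i₀) hp

theorem Matrix.coeff_map_C_mulVec {n m : Type*} [Fintype n] (M : Matrix m n K) (v : n → K[X])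
    (k : ℕ) (j : m) : ((M.map C *ᵥ v) j).coeff k = (M *ᵥ fun i => (v i).coeff k) j := by
  simp [Matrix.mulVec, dotProduct, Polynomial.finsetSum_coeff, Polynomial.coeff_C_mul]

theorem Matrix.exists_isPencilChain_ne_zero [Infinite K] {n : Type*} [Fintype n] [DecidableEq n]
    (M₁ M₂ : Matrix n n K) (hdet : ∀ τ : K, (M₁ - τ • M₂).det = 0) :
    ∃ c : ℕ → n → K, IsPencilChain M₁.mulVecLin M₂.mulVecLin c ∧ c ≠ 0 := by
  obtain ⟨v, hv0, hv⟩ : ∃ v ≠ 0, (M₁.map C - (X : K[X]) • M₂.map C) *ᵥ v = 0 := by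
    refine exists_mulVec_eq_zero_iff.2 (Polynomial.funext fun τ => ?_)
    rw [eval_zero, ← coe_evalRingHom, RingHom.map_det, ← hdet τ]
    congr 1
    ext i j
    simp [mul_comm _ τ]
  have hcoeff : ∀ k j, ((M₁.map C *ᵥ v) j).coeff k = (X * (M₂.map C *ᵥ v) j).coeff k := by
    rw [sub_mulVec, smul_mulVec, sub_eq_zero] at hv
    exact fun k j => congrArg (fun u => (u j).coeff k) hv
  refine ⟨fun k i => (v i).coeff k, ⟨?_, ?_, ?_⟩, ?_⟩
  · refine ⟨univ.sup (fun i => (v i).natDegree) + 1, fun k hk => funext fun i => ?_⟩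
    exact coeff_eq_zero_of_natDegree_lt
      ((Finset.le_sup (f := fun i => (v i).natDegree) (mem_univ i)).trans_lt hk)
  · funext j
    simpa [coeff_map_C_mulVec] using hcoeff 0 j
  · intro k
    funext j
    simpa [coeff_map_C_mulVec] using hcoeff (k + 1) j
  · intro h
    apply hv0
    funext i
    ext k
    exact congrFun (congrFun h k) i

theorem chainSpace_ne_bot [Infinite K] [FiniteDimensional K V₀] [FiniteDimensional K V₁]
    (hdim : finrank K V₀ = finrank K V₁) (hsing : ∀ τ : K, ¬ Function.Injective (A₁ - τ • A₂)) :
    chainSpace A₁ A₂ ≠ ⊥ := by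
  let b₀ := finBasisOfFinrankEq K V₀ hdim
  let b₁ := finBasis K V₁
  have hmat (A : V₀ →ₗ[K] V₁) (x) :
      b₁.equivFun (A (b₀.equivFun.symm x)) = LinearMap.toMatrix b₀ b₁ A *ᵥ x := by
    rw [Basis.equivFun_apply, ← LinearMap.toMatrix_mulVec_repr b₀, ← Basis.equivFun_apply,
      LinearEquiv.apply_symm_apply]
  obtain ⟨c, hc, hc0⟩ := Matrix.exists_isPencilChain_ne_zero
      (LinearMap.toMatrix b₀ b₁ A₁) (LinearMap.toMatrix b₀ b₁ A₂) fun τ => by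
    obtain ⟨x, hx, hx0⟩ : ∃ x, (A₁ - τ • A₂) x = 0 ∧ x ≠ 0 := by
      simpa [injective_iff_map_eq_zero] using hsing τ
    rw [← map_smul, ← map_sub, ← exists_mulVec_eq_zero_iff]
    refine ⟨b₀.equivFun x, by simpa using hx0, ?_⟩
    simpa [hx] using (hmat (A₁ - τ • A₂) (b₀.equivFun x)).symm
  let w k := b₀.equivFun.symm (c k)
  have hw : IsPencilChain A₁ A₂ w := by
    obtain ⟨⟨N, hN⟩, h₀, hsucc⟩ := hc
    refine ⟨⟨N, fun i hi => by simp [w, hN i hi]⟩, b₁.equivFun.injective ?_,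
      fun i => b₁.equivFun.injective ?_⟩
    · rw [map_zero]
      exact (hmat A₁ _).trans h₀
    · exact (hmat A₁ _).trans ((hsucc i).trans (hmat A₂ _).symm)
  obtain ⟨k, hk⟩ : ∃ k, c k ≠ 0 := by
    by_contra! h
    exact hc0 (funext h)
  exact (Submodule.ne_bot_iff _).2 ⟨w k, hw.mem_chainSpace k, (LinearEquiv.map_ne_zero_iff _).2 hk⟩

end Pencil

section Representation

variable {K V₀ V₁ W ι : Type*} [Field K] [AddCommGroup V₀] [Module K V₀] [AddCommGroup V₁]
  [Module K V₁] [AddCommGroup W] [Module K W]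
  {A₁ A₂ : V₀ →ₗ[K] V₁} {B D : ι → V₁ →ₗ[K] V₀} {e : V₀ →ₗ[K] W} {f : ι → W →ₗ[K] V₀}

theorem exists_mem_chainSpace_sub_smul_eq_zero [Infinite K]
    (he : ¬ chainSpace A₁ A₂ ≤ LinearMap.ker e) :
    ∃ (τ : K) (u : V₀), u ∈ chainSpace A₁ A₂ ∧ (A₁ - τ • A₂) u = 0 ∧ e u ≠ 0 := by
  obtain ⟨w, hw, i₀, hi₀⟩ : ∃ w, IsPencilChain A₁ A₂ w ∧ ∃ i, e (w i) ≠ 0 := by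
    simpa [chainSpace_le_ker_iff] using he
  obtain ⟨N, hN⟩ := hw.eventually_zero
  have hi₀N : i₀ < N := by
    by_contra!
    exact hi₀ (by simp [hN i₀ this])
  obtain ⟨τ, hτ⟩ := exists_sum_pow_smul_ne_zero (K := K) (fun i => e (w i)) hi₀N hi₀
  refine ⟨τ, ∑ i ∈ range N, τ ^ i • w i,
    sum_mem fun i _ => Submodule.smul_mem _ _ (hw.mem_chainSpace i),
    hw.sub_smul_apply_sum_eq_zero hN τ, ?_⟩
  simpa using hτ

variable (A₁ A₂ B D e f) in
structure SatisfiesQ1' : Prop where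
  A₂_comp_D : ∀ q, A₂ ∘ₗ D q = A₁ ∘ₗ B q
  D_comp_A₂ : ∀ q, D q ∘ₗ A₂ = B q ∘ₗ A₁ + f q ∘ₗ e

variable (A₁ A₂ B D) in
structure IsSubrep (S₀ : Submodule K V₀) (S₁ : Submodule K V₁) : Prop where
  map_A₁_le : S₀.map A₁ ≤ S₁
  map_A₂_le : S₀.map A₂ ≤ S₁
  map_B_le : ∀ q, S₁.map (B q) ≤ S₀
  map_D_le : ∀ q, S₁.map (D q) ≤ S₀

theorem IsSubrep.of_swap_sub_smul {τ : K} {S₀ : Submodule K V₀} {S₁ : Submodule K V₁}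
    (hS : IsSubrep A₂ (A₁ - τ • A₂) (fun q => τ • B q - D q) (fun q => -B q) S₀ S₁) :
    IsSubrep A₁ A₂ B D S₀ S₁ where
  map_A₁_le := by
    rintro _ ⟨x, hx, rfl⟩
    rw [show A₁ x = (A₁ - τ • A₂) x + τ • A₂ x by simp]
    exact add_mem (hS.map_A₂_le ⟨x, hx, rfl⟩) (Submodule.smul_mem _ τ (hS.map_A₁_le ⟨x, hx, rfl⟩))
  map_A₂_le := hS.map_A₁_le
  map_B_le q := by simpa using hS.map_D_le q
  map_D_le q := by
    have hB : S₁.map (B q) ≤ S₀ := by simpa using hS.map_D_le q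
    rintro _ ⟨y, hy, rfl⟩
    rw [show D q y = τ • B q y - (τ • B q - D q) y by simp]
    exact sub_mem (Submodule.smul_mem _ τ (hB ⟨y, hy, rfl⟩)) (hS.map_B_le q ⟨y, hy, rfl⟩)

namespace SatisfiesQ1'

theorem A₂_D_apply (h : SatisfiesQ1' A₁ A₂ B D e f) (q : ι) (y : V₁) :
    A₂ (D q y) = A₁ (B q y) :=
  LinearMap.congr_fun (h.A₂_comp_D q) y

theorem D_A₂_apply (h : SatisfiesQ1' A₁ A₂ B D e f) (q : ι) (x : V₀) :
    D q (A₂ x) = B q (A₁ x) + f q (e x) :=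
  LinearMap.congr_fun (h.D_comp_A₂ q) x

theorem swap_sub_smul (h : SatisfiesQ1' A₁ A₂ B D e f) (τ : K) :
    SatisfiesQ1' A₂ (A₁ - τ • A₂) (fun q => τ • B q - D q) (fun q => -B q) e f where
  A₂_comp_D q := by
    ext y
    simp [h.A₂_D_apply]
  D_comp_A₂ q := by
    ext x
    simp [h.D_A₂_apply]
    abel

theorem isPencilChain_B_A₂ (h : SatisfiesQ1' A₁ A₂ B D e f) {w : ℕ → V₀}
    (hw : IsPencilChain A₁ A₂ w) (he : ∀ i, e (w i) = 0) (q : ι) :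
    IsPencilChain A₁ A₂ fun i => B q (A₂ (w i)) := by
  obtain ⟨⟨N, hN⟩, h₀, hsucc⟩ := hw
  refine ⟨⟨N, fun i hi => by simp [hN i hi]⟩, ?_, fun i => ?_⟩
  · rw [← h.A₂_D_apply, h.D_A₂_apply, h₀, he]
    simp
  · rw [← h.A₂_D_apply, h.D_A₂_apply, hsucc, he, map_zero, add_zero]

theorem isSubrep_chainSpace (h : SatisfiesQ1' A₁ A₂ B D e f)
    (he : chainSpace A₁ A₂ ≤ LinearMap.ker e) :
    IsSubrep A₁ A₂ B D (chainSpace A₁ A₂) ((chainSpace A₁ A₂).map A₂) := by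
  rw [chainSpace_le_ker_iff] at he
  have hB q w (hw : IsPencilChain A₁ A₂ w) i : B q (A₂ (w i)) ∈ chainSpace A₁ A₂ :=
    (h.isPencilChain_B_A₂ hw (he w hw) q).mem_chainSpace i
  refine ⟨map_chainSpace_le, le_rfl, fun q => ?_, fun q => ?_⟩
  · rw [← Submodule.map_comp, map_chainSpace_le_iff]
    exact hB q
  · rw [← Submodule.map_comp, map_chainSpace_le_iff]
    intro w hw i
    rw [LinearMap.comp_apply, h.D_A₂_apply, he w hw, map_zero, add_zero]
    cases i with
    | zero => simp [hw.apply_zero]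
    | succ i => exact hw.apply_succ i ▸ hB q w hw i

theorem isSubrep_maxSubmoduleMapLe (h : SatisfiesQ1' A₁ A₂ B D e f) (hW : finrank K W = 1)
    {u : V₀} (hu : u ∈ maxSubmoduleMapLe A₁ A₂) (hA₂u : A₂ u = 0) (heu : e u ≠ 0) :
    IsSubrep A₁ A₂ B D (maxSubmoduleMapLe A₁ A₂) ((maxSubmoduleMapLe A₁ A₂).map A₂) ∧
      ∀ q, LinearMap.range (f q) ≤ maxSubmoduleMapLe A₁ A₂ := by
  set S := maxSubmoduleMapLe A₁ A₂
  set Y := S.map A₂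
  set X := ⨆ q, (Y.map (B q) ⊔ Y.map (D q) ⊔ LinearMap.range (f q))
  have hBX q : Y.map (B q) ≤ X := le_iSup_of_le q (le_sup_left.trans le_sup_left)
  have hDX q : Y.map (D q) ≤ X := le_iSup_of_le q (le_sup_right.trans le_sup_left)
  have hfX q : LinearMap.range (f q) ≤ X := le_iSup_of_le q le_sup_right
  have hSY : ∀ x ∈ S, A₁ x ∈ Y := fun x hx =>
    map_maxSubmoduleMapLe_le A₁ A₂ (Submodule.mem_map_of_mem hx)
  have hB q : ∀ y ∈ Y, A₁ (B q y) ∈ X.map A₂ := fun y hy =>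
    h.A₂_D_apply q y ▸ Submodule.mem_map_of_mem (hDX q (Submodule.mem_map_of_mem hy))
  have hf q (w : W) : A₁ (f q w) ∈ X.map A₂ := by
    obtain ⟨k, rfl⟩ := (finrank_eq_one_iff_of_nonzero' _ heu).1 hW w
    have hfu : f q (e u) = -B q (A₁ u) := by
      simpa [hA₂u, eq_neg_iff_add_eq_zero, add_comm] using (h.D_A₂_apply q u).symm
    rw [map_smul, hfu, map_smul, map_neg]
    exact Submodule.smul_mem _ _ (neg_mem (hB q _ (hSY u hu)))
  have hD q : ∀ y ∈ Y, A₁ (D q y) ∈ X.map A₂ := by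
    rintro _ ⟨x, hx, rfl⟩
    rw [h.D_A₂_apply, map_add]
    exact add_mem (hB q _ (hSY x hx)) (hf q _)
  have hXS : X ≤ S := by
    refine le_maxSubmoduleMapLe (Submodule.map_le_iff_le_comap.2 (iSup_le fun q => ?_))
    refine sup_le (sup_le ?_ ?_) ?_
    · rintro _ ⟨y, hy, rfl⟩
      exact hB q y hy
    · rintro _ ⟨y, hy, rfl⟩
      exact hD q y hy
    · rintro _ ⟨w, rfl⟩
      exact hf q w
  exact ⟨⟨map_maxSubmoduleMapLe_le A₁ A₂, le_rfl, fun q => (hBX q).trans hXS,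
    fun q => (hDX q).trans hXS⟩, fun q => (hfX q).trans hXS⟩

theorem exists_isSubrep_finrank_lt [Infinite K] [FiniteDimensional K V₀]
    (h : SatisfiesQ1' A₁ A₂ B D e f) (hW : finrank K W = 1)
    (he : ¬ chainSpace A₁ A₂ ≤ LinearMap.ker e) :
    ∃ S₀ S₁, IsSubrep A₁ A₂ B D S₀ S₁ ∧ (∀ q, LinearMap.range (f q) ≤ S₀) ∧
      finrank K S₁ < finrank K S₀ := by
  obtain ⟨τ, u, huU, hPu, heu⟩ := exists_mem_chainSpace_sub_smul_eq_zero he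
  have hu : u ∈ maxSubmoduleMapLe A₂ (A₁ - τ • A₂) :=
    le_maxSubmoduleMapLe (map_chainSpace_le_map_sub_smul τ) huU
  obtain ⟨hS, hf⟩ := (h.swap_sub_smul τ).isSubrep_maxSubmoduleMapLe hW hu hPu heu
  exact ⟨_, _, hS.of_swap_sub_smul, hf,
    Submodule.finrank_map_lt_of_mem_ker hu (fun hu0 => heu (by rw [hu0, map_zero])) hPu⟩

end SatisfiesQ1'

end Representation

theorem stmt_1_general (n c : ℕ) (hc : 1 ≤ c)
    (V₀ V₁ W : Type) [AddCommGroup V₀] [Module ℂ V₀] [FiniteDimensional ℂ V₀]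
    [AddCommGroup V₁] [Module ℂ V₁] [FiniteDimensional ℂ V₁]
    [AddCommGroup W] [Module ℂ W]
    (hV₀ : finrank ℂ V₀ = c) (hV₁ : finrank ℂ V₁ = c) (hW : finrank ℂ W = 1)
    (A₁ A₂ : V₀ →ₗ[ℂ] V₁)
    (B D : Fin (n - 1) → (V₁ →ₗ[ℂ] V₀))
    (e : V₀ →ₗ[ℂ] W) (f : Fin (n - 1) → (W →ₗ[ℂ] V₀))
    (hQ1'a : ∀ q, A₂ ∘ₗ D q = A₁ ∘ₗ B q)
    (hQ1'b : ∀ q, D q ∘ₗ A₂ = B q ∘ₗ A₁ + f q ∘ₗ e)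
    -- θ_c-semistability
    (hss : ∀ (S₀ : Submodule ℂ V₀) (S₁ : Submodule ℂ V₁),
      S₀.map A₁ ≤ S₁ → S₀.map A₂ ≤ S₁ →
      (∀ q, S₁.map (B q) ≤ S₀) → (∀ q, S₁.map (D q) ≤ S₀) →
      ((S₀ ≤ LinearMap.ker e →
          (2 * c : ℤ) * (finrank ℂ S₀ : ℤ) + (1 - 2 * c) * (finrank ℂ S₁ : ℤ) ≤ 0) ∧
       ((∀ q, LinearMap.range (f q) ≤ S₀) →
          (2 * c : ℤ) * (finrank ℂ S₀ : ℤ) + (1 - 2 * c) * (finrank ℂ S₁ : ℤ) ≤ c))) :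
    ∃ ν₁ ν₂ : ℂ, Function.Bijective (ν₁ • A₁ + ν₂ • A₂) := by
  have hrep : SatisfiesQ1' A₁ A₂ B D e f := ⟨hQ1'a, hQ1'b⟩
  have hdim : finrank ℂ V₀ = finrank ℂ V₁ := hV₀.trans hV₁.symm
  by_contra! hreg
  have hsing (τ : ℂ) : ¬ Function.Injective (A₁ - τ • A₂) := fun hinj => hreg 1 (-τ) <| by
    rw [one_smul, neg_smul, ← sub_eq_add_neg]
    exact ⟨hinj, (LinearMap.injective_iff_surjective_of_finrank_eq_finrank hdim).1 hinj⟩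
  have hU := chainSpace_ne_bot hdim hsing
  have hc' : (1 : ℤ) ≤ c := by exact_mod_cast hc
  by_cases he : chainSpace A₁ A₂ ≤ LinearMap.ker e
  · have hS := hrep.isSubrep_chainSpace he
    have hwt := (hss _ _ hS.map_A₁_le hS.map_A₂_le hS.map_B_le hS.map_D_le).1 he
    have hle : (finrank ℂ ((chainSpace A₁ A₂).map A₂) : ℤ) ≤ finrank ℂ (chainSpace A₁ A₂) := by
      exact_mod_cast Submodule.finrank_map_le A₂ (chainSpace A₁ A₂)
    have hpos : (1 : ℤ) ≤ finrank ℂ (chainSpace A₁ A₂) := by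
      exact_mod_cast Nat.one_le_iff_ne_zero.2 (Submodule.finrank_eq_zero.not.2 hU)
    nlinarith [mul_nonneg (sub_nonneg.2 hc') (sub_nonneg.2 hle)]
  · obtain ⟨S₀, S₁, hS, hf, hlt⟩ := hrep.exists_isSubrep_finrank_lt hW he
    have hwt := (hss S₀ S₁ hS.map_A₁_le hS.map_A₂_le hS.map_B_le hS.map_D_le).2 hf
    have hlt' : (finrank ℂ S₁ : ℤ) + 1 ≤ finrank ℂ S₀ := by exact_mod_cast hlt
    nlinarith [mul_nonneg (sub_nonneg.2 hc') (sub_nonneg.2 hlt')]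

/-- (Proposition 3.5) For every θ_c-semistable (c,c)-dimensional framed representation
of Λ'_n, the matrix pencil A₁ + λA₂ is regular. -/
theorem stmt_1 (n c : ℕ) (hn : 2 ≤ n) (hc : 1 ≤ c)
    (V₀ V₁ W : Type) [AddCommGroup V₀] [Module ℂ V₀] [FiniteDimensional ℂ V₀]
    [AddCommGroup V₁] [Module ℂ V₁] [FiniteDimensional ℂ V₁]
    [AddCommGroup W] [Module ℂ W] [FiniteDimensional ℂ W]
    (hV₀ : finrank ℂ V₀ = c) (hV₁ : finrank ℂ V₁ = c) (hW : finrank ℂ W = 1)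
    (A₁ A₂ : V₀ →ₗ[ℂ] V₁)
    (B D : Fin (n - 1) → (V₁ →ₗ[ℂ] V₀))
    (e : V₀ →ₗ[ℂ] W) (f : Fin (n - 1) → (W →ₗ[ℂ] V₀))
    (hQ1'a : ∀ q, A₂ ∘ₗ D q = A₁ ∘ₗ B q)
    (hQ1'b : ∀ q, D q ∘ₗ A₂ = B q ∘ₗ A₁ + f q ∘ₗ e)
    -- θ_c-semistability
    (hss : ∀ (S₀ : Submodule ℂ V₀) (S₁ : Submodule ℂ V₁),
      S₀.map A₁ ≤ S₁ → S₀.map A₂ ≤ S₁ →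
      (∀ q, S₁.map (B q) ≤ S₀) → (∀ q, S₁.map (D q) ≤ S₀) →
      ((S₀ ≤ LinearMap.ker e →
          (2 * c : ℤ) * (finrank ℂ S₀ : ℤ) + (1 - 2 * c) * (finrank ℂ S₁ : ℤ) ≤ 0) ∧
       ((∀ q, LinearMap.range (f q) ≤ S₀) →
          (2 * c : ℤ) * (finrank ℂ S₀ : ℤ) + (1 - 2 * c) * (finrank ℂ S₁ : ℤ) ≤ c))) :
    ∃ ν₁ ν₂ : ℂ, Function.Bijective (ν₁ • A₁ + ν₂ • A₂) :=
  stmt_1_general n c hc V₀ V₁ W hV₀ hV₁ hW A₁ A₂ B D e f hQ1'a hQ1'b hss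
end

section
/- (Content of Theorem 3.7, the main theorem) For every n ≥ 2 and c ≥ 1, every θ_c-semistable (c,c)-dimensional framed representation (A₁,A₂;C₁,…,C_n;e;f₁,…,f_{n−1}) of Λ_n has regular matrix pencil A₁ + λA₂, i.e., there exist ν₁, ν₂ ∈ ℂ such that ν₁A₁ + ν₂A₂ : V₀ → V₁ is bijective. (Since on the θ_c-semistable locus regularity of the pencil is equivalent to the equations f₁ = ⋯ = f_{n−1} = 0 cutting out the component H(n,c), this says that H(n,c) is the whole moduli space M(Λ_n, v_c, 1, θ_c).) -/
/-!
A singular pencil `A₁ + λA₂` between spaces of equal dimension has a nonzero polynomial kernel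
vector `u(λ) = ∑ uᵢ λⁱ`, and so does its transpose. Let `S₀` be the span of the coefficients of
all such `u` and `S₁ = A₂ S₀`. Looking at leading coefficients gives `dim S₁ < dim S₀`, and if `e`
vanishes on `S₀` the relations (Q1) turn `C_q A₂ u(λ)` into kernel vectors again, so `(S₀, S₁)` is a
subrepresentation in `ker e` violating (i). Otherwise `e u(λ) ≠ 0` for some `u`, and (Q1) give
`(ζ(λ) A₂ f_q) · (e u(λ)) = 0` in `ℂ[λ]` for every left kernel vector `ζ(λ)`, so all of them kill
`A₂ f_q`. The same construction for the transposed pencil, followed by taking annihilators, then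
yields a subrepresentation containing the images of the `f_q` that violates (ii).
-/

open Module

/-- `v` is the coefficient sequence of a polynomial `v(λ) = ∑ vᵢ λⁱ` with `(φ + λψ) v(λ) = 0`. -/
structure IsPencilChain_s3 {K M N : Type*} [Field K] [AddCommGroup M] [Module K M]
    [AddCommGroup N] [Module K N] (φ ψ : M →ₗ[K] N) (v : ℕ → M) : Prop where
  apply_zero : φ (v 0) = 0
  apply_succ : ∀ i, φ (v (i + 1)) = -ψ (v i)
  eventually_zero : ∃ B, ∀ i, B ≤ i → v i = 0

def pencilChainSpan {K M N : Type*} [Field K] [AddCommGroup M] [Module K M]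
    [AddCommGroup N] [Module K N] (φ ψ : M →ₗ[K] N) : Submodule K M :=
  Submodule.span K {x | ∃ v, IsPencilChain_s3 φ ψ v ∧ ∃ i, v i = x}

namespace IsPencilChain_s3

variable {K M N M' N' : Type*} [Field K] [AddCommGroup M] [Module K M] [AddCommGroup N] [Module K N]
  [AddCommGroup M'] [Module K M'] [AddCommGroup N'] [Module K N']
  {φ ψ : M →ₗ[K] N} {v : ℕ → M}

theorem mem_pencilChainSpan (hv : IsPencilChain_s3 φ ψ v) (i : ℕ) : v i ∈ pencilChainSpan φ ψ :=
  Submodule.subset_span ⟨v, hv, i, rfl⟩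

theorem exists_ne_zero_map_snd_eq_zero (hv : IsPencilChain_s3 φ ψ v) {i : ℕ} (hvi : v i ≠ 0) :
    ∃ j, v j ≠ 0 ∧ ψ (v j) = 0 := by
  by_contra! h
  have hne : ∀ k, v (i + k) ≠ 0 := by
    intro k
    induction k with
    | zero => exact hvi
    | succ k ih =>
      intro hzero
      apply h _ ih
      rw [← neg_eq_zero, ← hv.apply_succ, show i + k + 1 = i + (k + 1) from rfl, hzero, map_zero]
  obtain ⟨B, hB⟩ := hv.eventually_zero
  exact hne B (hB _ (Nat.le_add_left B i))

theorem of_arrowCongr (e₀ : M ≃ₗ[K] M') (e₁ : N ≃ₗ[K] N') {v : ℕ → M'}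
    (hv : IsPencilChain_s3 (e₀.arrowCongr e₁ φ) (e₀.arrowCongr e₁ ψ) v) :
    IsPencilChain_s3 φ ψ (e₀.symm ∘ v) where
  apply_zero := by
    simpa using congrArg e₁.symm hv.apply_zero
  apply_succ i := by
    simpa using congrArg e₁.symm (hv.apply_succ i)
  eventually_zero := by
    obtain ⟨B, hB⟩ := hv.eventually_zero
    exact ⟨B, fun i hi => by simp [hB i hi]⟩

end IsPencilChain_s3

open Polynomial in
theorem Polynomial.coeff_map_C_mulVec {R ι κ : Type*} [CommSemiring R] [Fintype κ]
    (F : Matrix ι κ R) (w : κ → R[X]) (i : ℕ) (r : ι) :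
    ((F.map C).mulVec w r).coeff i = F.mulVec (fun s => (w s).coeff i) r := by
  simp [Matrix.mulVec, dotProduct, finsetSum_coeff, coeff_C_mul]

open Polynomial in
theorem Matrix.exists_isPencilChain_toLin' {K ι : Type*} [Field K] [Infinite K] [Fintype ι]
    [DecidableEq ι] (F G : Matrix ι ι K) (hdet : ∀ t : K, (F + t • G).det = 0) :
    ∃ v, IsPencilChain_s3 (toLin' F) (toLin' G) v ∧ ∃ i, v i ≠ 0 := by
  set P : Matrix ι ι K[X] := F.map C + (X : K[X]) • G.map C
  have hP : P.det = 0 := by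
    refine zero_of_eval_zero _ fun t => ?_
    have hPt : (evalRingHom t).mapMatrix P = F + t • G := by
      ext r s
      simp [P]
      ring
    rw [← coe_evalRingHom, RingHom.map_det, hPt, hdet]
  obtain ⟨w, hw0, hw⟩ := Matrix.exists_mulVec_eq_zero_iff.mpr hP
  have hw' (r : ι) : (F.map C).mulVec w r + X * (G.map C).mulVec w r = 0 := by
    have := congrFun hw r
    rwa [Matrix.add_mulVec, Matrix.smul_mulVec, Pi.add_apply, Pi.smul_apply, smul_eq_mul] at this
  refine ⟨fun i r => (w r).coeff i, ⟨?_, fun i => ?_, ?_⟩, ?_⟩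
  · ext r
    simpa [coeff_map_C_mulVec] using congrArg (coeff · 0) (hw' r)
  · ext r
    have := congrArg (coeff · (i + 1)) (hw' r)
    simp only [coeff_add, coeff_X_mul, coeff_zero] at this
    simpa [coeff_map_C_mulVec, eq_neg_iff_add_eq_zero] using this
  · refine ⟨Finset.univ.sup (fun r => (w r).natDegree) + 1, fun i hi => ?_⟩
    ext r
    exact coeff_eq_zero_of_natDegree_lt
      (lt_of_le_of_lt (Finset.le_sup (f := fun r => (w r).natDegree) (Finset.mem_univ r)) hi)
  · obtain ⟨r, hr⟩ := Function.ne_iff.mp hw0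
    obtain ⟨i, hi⟩ := Polynomial.ext_iff.not.mp hr |> not_forall.mp
    exact ⟨i, Function.ne_iff.mpr ⟨r, hi⟩⟩

section Pencil

variable {K M N : Type*} [Field K] [AddCommGroup M] [Module K M] [AddCommGroup N] [Module K N]
  {φ ψ : M →ₗ[K] N}

theorem exists_isPencilChain_of_not_bijective [Infinite K] [FiniteDimensional K M]
    [FiniteDimensional K N] (hMN : finrank K M = finrank K N)
    (hsing : ∀ a b : K, ¬Function.Bijective (a • φ + b • ψ)) :
    ∃ v, IsPencilChain_s3 φ ψ v ∧ ∃ i, v i ≠ 0 := by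
  let e₀ : M ≃ₗ[K] (Fin (finrank K M) → K) := LinearEquiv.ofFinrankEq _ _ (by simp)
  let e₁ : N ≃ₗ[K] (Fin (finrank K M) → K) := LinearEquiv.ofFinrankEq _ _ (by simp [hMN])
  have hdet (t : K) : (LinearMap.toMatrix' (e₀.arrowCongr e₁ φ) +
      t • LinearMap.toMatrix' (e₀.arrowCongr e₁ ψ)).det = 0 := by
    by_contra hne
    rw [← map_smul, ← map_add, ← map_smul, ← map_add, LinearMap.det_toMatrix'] at hne
    have hbij := (Module.End.isUnit_iff _).mp
      ((LinearMap.isUnit_iff_isUnit_det _).mpr (isUnit_iff_ne_zero.mpr hne))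
    refine hsing 1 t ?_
    convert (e₁.symm.bijective.comp hbij).comp e₀.bijective using 1
    ext x
    simp
  obtain ⟨v, hv, i, hvi⟩ := Matrix.exists_isPencilChain_toLin' _ _ hdet
  rw [Matrix.toLin'_toMatrix', Matrix.toLin'_toMatrix'] at hv
  exact ⟨_, hv.of_arrowCongr e₀ e₁, i, by simpa using hvi⟩

theorem map_fst_pencilChainSpan_le :
    (pencilChainSpan φ ψ).map φ ≤ (pencilChainSpan φ ψ).map ψ := by
  rw [pencilChainSpan, Submodule.map_span_le]
  rintro _ ⟨v, hv, i | i, rfl⟩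
  · rw [hv.apply_zero]
    exact Submodule.zero_mem _
  · rw [hv.apply_succ, ← map_neg]
    exact Submodule.mem_map_of_mem (Submodule.neg_mem _ (hv.mem_pencilChainSpan i))

theorem IsPencilChain_s3.finrank_map_snd_pencilChainSpan_lt [FiniteDimensional K M] {v : ℕ → M}
    (hv : IsPencilChain_s3 φ ψ v) {i : ℕ} (hvi : v i ≠ 0) :
    finrank K ((pencilChainSpan φ ψ).map ψ) < finrank K (pencilChainSpan φ ψ) := by
  obtain ⟨j, hvj, hψj⟩ := hv.exists_ne_zero_map_snd_eq_zero hvi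
  have hker : LinearMap.ker (ψ.domRestrict (pencilChainSpan φ ψ)) ≠ ⊥ :=
    Submodule.ne_bot_iff _ |>.mpr
      ⟨⟨v j, hv.mem_pencilChainSpan j⟩, by simpa using hψj, by simpa using hvj⟩
  have := (ψ.domRestrict (pencilChainSpan φ ψ)).finrank_range_add_finrank_ker
  rw [LinearMap.range_domRestrict] at this
  have := mt Submodule.finrank_eq_zero.mp hker
  omega

/-- `T ψ v(λ)` is again a polynomial kernel vector. -/
theorem map_comp_pencilChainSpan_le (T : N →ₗ[K] M)
    (hT : ∀ x ∈ pencilChainSpan φ ψ, φ (T (ψ x)) = ψ (T (φ x))) :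
    (pencilChainSpan φ ψ).map (T ∘ₗ ψ) ≤ pencilChainSpan φ ψ := by
  rw [pencilChainSpan, Submodule.map_span_le]
  rintro _ ⟨v, hv, i, rfl⟩
  have hTv : IsPencilChain_s3 φ ψ (fun i => T (ψ (v i))) :=
    { apply_zero := by rw [hT _ (hv.mem_pencilChainSpan 0), hv.apply_zero, map_zero, map_zero]
      apply_succ := fun i => by
        rw [hT _ (hv.mem_pencilChainSpan _), hv.apply_succ, map_neg, map_neg]
      eventually_zero := by
        obtain ⟨B, hB⟩ := hv.eventually_zero
        exact ⟨B, fun i hi => by simp [hB i hi]⟩ }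
  exact hTv.mem_pencilChainSpan i

theorem map_comp_pencilChainSpan_le_of_map_comp_le {T T' : N →ₗ[K] M}
    (hT : (pencilChainSpan φ ψ).map (T ∘ₗ ψ) ≤ pencilChainSpan φ ψ)
    (hT' : ∀ x ∈ pencilChainSpan φ ψ, T' (ψ x) = T (φ x)) :
    (pencilChainSpan φ ψ).map (T' ∘ₗ ψ) ≤ pencilChainSpan φ ψ := by
  rintro _ ⟨x, hx, rfl⟩
  obtain ⟨y, hy, hyx⟩ := map_fst_pencilChainSpan_le (Submodule.mem_map_of_mem (f := φ) hx)
  rw [LinearMap.comp_apply, hT' x hx, ← hyx]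
  exact hT (Submodule.mem_map_of_mem hy)

theorem forall_map_comp_pencilChainSpan_le {n : ℕ} (D : Fin n → N →ₗ[K] M)
    (hzero : ∀ (h : 0 < n), ∀ x ∈ pencilChainSpan φ ψ,
      φ (D ⟨0, h⟩ (ψ x)) = ψ (D ⟨0, h⟩ (φ x)))
    (hsucc : ∀ (k : ℕ) (hk : k + 1 < n), ∀ x ∈ pencilChainSpan φ ψ,
      D ⟨k + 1, hk⟩ (ψ x) = D ⟨k, by omega⟩ (φ x)) (k : Fin n) :
    (pencilChainSpan φ ψ).map (D k ∘ₗ ψ) ≤ pencilChainSpan φ ψ := by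
  obtain ⟨k, hk⟩ := k
  induction k with
  | zero => exact map_comp_pencilChainSpan_le _ (hzero hk)
  | succ k ih => exact map_comp_pencilChainSpan_le_of_map_comp_le (ih (by omega)) (hsucc k hk)

end Pencil

open Finset in
theorem eq_zero_of_sum_antidiagonal_mul_eq_zero {R : Type*} [CommRing R] [IsDomain R]
    {a d : ℕ → R} (h : ∀ k, ∑ p ∈ antidiagonal k, a p.1 * d p.2 = 0) (hd : d ≠ 0) : a = 0 := by
  have hmul : PowerSeries.mk a * PowerSeries.mk d = 0 := by
    ext k
    simp [PowerSeries.coeff_mul, h]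
  have hd' : PowerSeries.mk d ≠ 0 := fun h0 => hd (funext fun i => by
    simpa using congrArg (PowerSeries.coeff i) h0)
  funext j
  simpa using congrArg (PowerSeries.coeff j) ((mul_eq_zero.mp hmul).resolve_right hd')

open Finset in
theorem eq_zero_of_sum_antidiagonal_apply_eq_zero {K W : Type*} [Field K] [AddCommGroup W]
    [Module K W] (hW : finrank K W = 1) {g : ℕ → Dual K W} {w : ℕ → W}
    (h : ∀ k, ∑ p ∈ antidiagonal k, g p.1 (w p.2) = 0) {i : ℕ} (hwi : w i ≠ 0) (j : ℕ) :
    g j = 0 := by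
  have hspan := (finrank_eq_one_iff_of_nonzero' (w i) hwi).mp hW
  choose d hd using fun l => hspan (w l)
  have hgd : (fun j => g j (w i)) = 0 := by
    refine eq_zero_of_sum_antidiagonal_mul_eq_zero (d := d) (fun k => ?_) fun hd0 => hwi ?_
    · rw [← h k]
      refine Finset.sum_congr rfl fun p _ => ?_
      rw [← hd p.2, map_smul, smul_eq_mul, mul_comm]
    · rw [← hd i, hd0, Pi.zero_apply, zero_smul]
  ext x
  obtain ⟨t, rfl⟩ := hspan x
  simp [show g j (w i) = 0 from congrFun hgd j]

section Duality

variable {K M N : Type*} [Field K] [AddCommGroup M] [Module K M] [AddCommGroup N] [Module K N]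
  {φ ψ : M →ₗ[K] N} {u : ℕ → M} {ζ : ℕ → Dual K N}

open Finset in
/-- With `u(λ)` and `ζ(λ)` the right and left polynomial kernel vectors of `φ + λψ`, both
sides are the coefficients of `ζ(λ) (φ G ψ - ψ G φ) u(λ)`, which vanishes because
`ζ(λ) φ = -λ ζ(λ) ψ` and `φ u(λ) = -λ ψ u(λ)`. -/
theorem sum_antidiagonal_apply_comp_eq (hu : IsPencilChain_s3 φ ψ u)
    (hζ : IsPencilChain_s3 φ.dualMap ψ.dualMap ζ) (G : N →ₗ[K] M) (k : ℕ) :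
    ∑ p ∈ antidiagonal k, ζ p.1 (φ (G (ψ (u p.2)))) =
      ∑ p ∈ antidiagonal k, ζ p.1 (ψ (G (φ (u p.2)))) := by
  have hζ₀ (x : M) : ζ 0 (φ x) = 0 := LinearMap.congr_fun hζ.apply_zero x
  have hζs (j : ℕ) (x : M) : ζ (j + 1) (φ x) = -ζ j (ψ x) := LinearMap.congr_fun (hζ.apply_succ j) x
  cases k with
  | zero => simp [hζ₀, hu.apply_zero]
  | succ k =>
    rw [Nat.sum_antidiagonal_succ, Nat.sum_antidiagonal_succ']
    simp [hζ₀, hζs, hu.apply_zero, hu.apply_succ]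

/-- In `K[λ]`, `(ζ(λ) ψ a) · (b u(λ)) = ζ(λ) (φ G ψ - ψ G φ) u(λ) = 0`, and `b u(λ) ≠ 0`. -/
theorem IsPencilChain_s3.dualMap_comp_eq_zero {W : Type*} [AddCommGroup W] [Module K W]
    (hW : finrank K W = 1) {G G' : N →ₗ[K] M} {a : W →ₗ[K] M} {b : M →ₗ[K] W}
    (h₁ : ψ ∘ₗ G' = φ ∘ₗ G) (h₂ : G' ∘ₗ ψ = G ∘ₗ φ + a ∘ₗ b)
    (hu : IsPencilChain_s3 φ ψ u) {i : ℕ} (hui : b (u i) ≠ 0)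
    (hζ : IsPencilChain_s3 φ.dualMap ψ.dualMap ζ) (j : ℕ) : (ψ ∘ₗ a).dualMap (ζ j) = 0 := by
  refine eq_zero_of_sum_antidiagonal_apply_eq_zero hW (g := fun l => (ψ ∘ₗ a).dualMap (ζ l))
    (w := fun l => b (u l)) (fun k => ?_) hui j
  have hab (x : M) : ψ (a (b x)) = φ (G (ψ x)) - ψ (G (φ x)) := by
    have h := congrArg ψ (LinearMap.congr_fun h₂ x)
    rw [← LinearMap.comp_apply φ G, ← h₁]
    simp only [LinearMap.comp_apply, LinearMap.add_apply, map_add] at h ⊢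
    rw [h]
    abel
  simp only [LinearMap.dualMap_apply, LinearMap.comp_apply, hab, map_sub, Finset.sum_sub_distrib]
  exact sub_eq_zero.mpr (sum_antidiagonal_apply_comp_eq hu hζ G k)

theorem Submodule.map_dualCoannihilator_le_of_map_dualMap_le {g : M →ₗ[K] N}
    {P : Submodule K (Dual K N)} {Q : Submodule K (Dual K M)} (h : P.map g.dualMap ≤ Q) :
    Q.dualCoannihilator.map g ≤ P.dualCoannihilator := by
  rintro _ ⟨x, hx, rfl⟩
  rw [Submodule.mem_dualCoannihilator]
  exact fun ξ hξ => (Submodule.mem_dualCoannihilator x).mp hx _ (h ⟨ξ, hξ, rfl⟩)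

end Duality

section FramedRepresentation

variable {K V₀ V₁ W : Type*} [Field K] [AddCommGroup V₀] [Module K V₀] [AddCommGroup V₁]
  [Module K V₁] [AddCommGroup W] [Module K W] {n : ℕ} {A₁ A₂ : V₀ →ₗ[K] V₁}
  {C : Fin n → V₁ →ₗ[K] V₀} {e : V₀ →ₗ[K] W} {f : Fin (n - 1) → W →ₗ[K] V₀}

variable (A₁ A₂ C e f) in
structure SatisfiesQ1 : Prop where
  A₂_comp_C_succ : ∀ k (hk : k + 1 < n), A₂ ∘ₗ C ⟨k + 1, hk⟩ = A₁ ∘ₗ C ⟨k, by omega⟩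
  C_succ_comp_A₂ : ∀ k (hk : k + 1 < n),
    C ⟨k + 1, hk⟩ ∘ₗ A₂ = C ⟨k, by omega⟩ ∘ₗ A₁ + f ⟨k, by omega⟩ ∘ₗ e

variable (A₁ A₂ C) in
def IsSubrepresentation (S₀ : Submodule K V₀) (S₁ : Submodule K V₁) : Prop :=
  S₀.map A₁ ≤ S₁ ∧ S₀.map A₂ ≤ S₁ ∧ ∀ q, S₁.map (C q) ≤ S₀

theorem map_map_C_pencilChainSpan_le (hn : 2 ≤ n)
    (hQ : SatisfiesQ1 A₁ A₂ C e f)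
    (he : pencilChainSpan A₁ A₂ ≤ LinearMap.ker e) (q : Fin n) :
    ((pencilChainSpan A₁ A₂).map A₂).map (C q) ≤ pencilChainSpan A₁ A₂ := by
  have hC (k : ℕ) (hk : k + 1 < n) (x : V₀) (hx : x ∈ pencilChainSpan A₁ A₂) :
      C ⟨k + 1, hk⟩ (A₂ x) = C ⟨k, by omega⟩ (A₁ x) := by
    simpa [LinearMap.mem_ker.mp (he hx)] using LinearMap.congr_fun (hQ.C_succ_comp_A₂ k hk) x
  rw [← Submodule.map_comp]
  refine forall_map_comp_pencilChainSpan_le C (fun h x hx => ?_) hC q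
  rw [← hC 0 (by omega) x hx, ← LinearMap.comp_apply A₁, ← hQ.A₂_comp_C_succ 0 (by omega),
    LinearMap.comp_apply]

theorem pencilChainSpan_dualMap_le_ker (hW : finrank K W = 1)
    (hQ : SatisfiesQ1 A₁ A₂ C e f)
    (he : ¬pencilChainSpan A₁ A₂ ≤ LinearMap.ker e) (q : Fin (n - 1)) :
    pencilChainSpan A₁.dualMap A₂.dualMap ≤ LinearMap.ker (A₂ ∘ₗ f q).dualMap := by
  obtain ⟨_, ⟨u, hu, i, rfl⟩, hui⟩ := Set.not_subset.mp (mt Submodule.span_le.mpr he)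
  rw [pencilChainSpan, Submodule.span_le]
  rintro _ ⟨ζ, hζ, j, rfl⟩
  exact LinearMap.mem_ker.mpr <| hu.dualMap_comp_eq_zero hW (hQ.A₂_comp_C_succ q (by omega))
    (hQ.C_succ_comp_A₂ q (by omega))
    (fun h => hui (LinearMap.mem_ker.mpr h)) hζ j

theorem map_dualMap_C_map_pencilChainSpan_dualMap_le (hn : 2 ≤ n)
    (hQ : SatisfiesQ1 A₁ A₂ C e f)
    (hf : ∀ q, pencilChainSpan A₁.dualMap A₂.dualMap ≤ LinearMap.ker (A₂ ∘ₗ f q).dualMap)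
    (q : Fin n) :
    ((pencilChainSpan A₁.dualMap A₂.dualMap).map A₂.dualMap).map (C q).dualMap ≤
      pencilChainSpan A₁.dualMap A₂.dualMap := by
  have hC (k : ℕ) (hk : k + 1 < n) (ξ : Dual K V₁) :
      (C ⟨k + 1, hk⟩).dualMap (A₂.dualMap ξ) = (C ⟨k, by omega⟩).dualMap (A₁.dualMap ξ) := by
    ext y
    simpa using congrArg ξ (LinearMap.congr_fun (hQ.A₂_comp_C_succ k hk) y)
  rw [← Submodule.map_comp]
  refine forall_map_comp_pencilChainSpan_le (fun q => (C q).dualMap) (fun h ξ hξ => ?_)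
    (fun k hk ξ _ => hC k hk ξ) q
  ext x
  have hξ : ξ (A₂ (f ⟨0, by omega⟩ (e x))) = 0 := LinearMap.congr_fun (hf _ hξ) (e x)
  have h := congrArg (ξ ∘ₗ A₂) (LinearMap.congr_fun (hQ.C_succ_comp_A₂ 0 (by omega)) x)
  simp only [LinearMap.comp_apply, LinearMap.add_apply, map_add, hξ, add_zero] at h
  simpa [← h] using congrArg ξ (LinearMap.congr_fun (hQ.A₂_comp_C_succ 0 (by omega)) (A₂ x))

theorem exists_isSubrepresentation_le_ker [FiniteDimensional K V₀] (hn : 2 ≤ n)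
    (hQ : SatisfiesQ1 A₁ A₂ C e f)
    (he : pencilChainSpan A₁ A₂ ≤ LinearMap.ker e) {u : ℕ → V₀} (hu : IsPencilChain_s3 A₁ A₂ u)
    {i : ℕ} (hui : u i ≠ 0) :
    ∃ S₀ S₁, IsSubrepresentation A₁ A₂ C S₀ S₁ ∧ S₀ ≤ LinearMap.ker e ∧
      finrank K S₁ < finrank K S₀ :=
  ⟨_, _, ⟨map_fst_pencilChainSpan_le, le_rfl, map_map_C_pencilChainSpan_le hn hQ he⟩, he,
    hu.finrank_map_snd_pencilChainSpan_lt hui⟩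

theorem exists_isSubrepresentation_range_le [Infinite K] [FiniteDimensional K V₀]
    [FiniteDimensional K V₁] (hV : finrank K V₀ = finrank K V₁) (hW : finrank K W = 1)
    (hn : 2 ≤ n)
    (hQ : SatisfiesQ1 A₁ A₂ C e f)
    (hsing : ∀ a b : K, ¬Function.Bijective (a • A₁ + b • A₂))
    (he : ¬pencilChainSpan A₁ A₂ ≤ LinearMap.ker e) :
    ∃ S₀ S₁, IsSubrepresentation A₁ A₂ C S₀ S₁ ∧ (∀ q, LinearMap.range (f q) ≤ S₀) ∧
      finrank K S₁ < finrank K S₀ := by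
  have hf := pencilChainSpan_dualMap_le_ker hW hQ he
  have hsing' (a b : K) : ¬Function.Bijective (a • A₁.dualMap + b • A₂.dualMap) := by
    have hdual : a • A₁.dualMap + b • A₂.dualMap = (a • A₁ + b • A₂).dualMap := by
      ext
      simp
    rw [hdual, LinearMap.dualMap_bijective_iff]
    exact hsing a b
  obtain ⟨ζ, hζ, j, hζj⟩ := exists_isPencilChain_of_not_bijective
    (by simp only [Subspace.dual_finrank_eq, hV]) hsing'
  have hlt := hζ.finrank_map_snd_pencilChainSpan_lt hζj
  set P := pencilChainSpan A₁.dualMap A₂.dualMap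
  refine ⟨(P.map A₂.dualMap).dualCoannihilator, P.dualCoannihilator,
    ⟨Submodule.map_dualCoannihilator_le_of_map_dualMap_le map_fst_pencilChainSpan_le,
      Submodule.map_dualCoannihilator_le_of_map_dualMap_le le_rfl,
      fun q => Submodule.map_dualCoannihilator_le_of_map_dualMap_le
        (map_dualMap_C_map_pencilChainSpan_dualMap_le hn hQ hf q)⟩,
    fun q => ?_, ?_⟩
  · rw [← Submodule.le_dualAnnihilator_iff_le_dualCoannihilator,
      ← LinearMap.ker_dualMap_eq_dualAnnihilator_range, Submodule.map_le_iff_le_comap,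
      ← LinearMap.ker_comp, LinearMap.dualMap_comp_dualMap]
    exact hf q
  · have h₀ := Subspace.finrank_add_finrank_dualCoannihilator_eq (P.map A₂.dualMap)
    have h₁ := Subspace.finrank_add_finrank_dualCoannihilator_eq P
    omega

end FramedRepresentation

/-- (Theorem 3.7, main theorem) For every n ≥ 2 and c ≥ 1, every θ_c-semistable
(c,c)-dimensional framed representation of Λ_n has regular matrix pencil A₁ + λA₂. -/
theorem stmt_3 (n c : ℕ) (hn : 2 ≤ n) (hc : 1 ≤ c)
    (V₀ V₁ W : Type) [AddCommGroup V₀] [Module ℂ V₀] [FiniteDimensional ℂ V₀]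
    [AddCommGroup V₁] [Module ℂ V₁] [FiniteDimensional ℂ V₁]
    [AddCommGroup W] [Module ℂ W]
    (hV₀ : finrank ℂ V₀ = c) (hV₁ : finrank ℂ V₁ = c) (hW : finrank ℂ W = 1)
    (A₁ A₂ : V₀ →ₗ[ℂ] V₁)
    (C : Fin n → (V₁ →ₗ[ℂ] V₀))
    (e : V₀ →ₗ[ℂ] W) (f : Fin (n - 1) → (W →ₗ[ℂ] V₀))
    -- the relations (Q1)
    (hQ1a : ∀ q : Fin (n - 1),
      A₂ ∘ₗ C ⟨q.1 + 1, by have := q.2; omega⟩ = A₁ ∘ₗ C ⟨q.1, by have := q.2; omega⟩)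
    (hQ1b : ∀ q : Fin (n - 1),
      C ⟨q.1 + 1, by have := q.2; omega⟩ ∘ₗ A₂ =
        C ⟨q.1, by have := q.2; omega⟩ ∘ₗ A₁ + f q ∘ₗ e)
    -- θ_c-semistability
    (hss : ∀ (S₀ : Submodule ℂ V₀) (S₁ : Submodule ℂ V₁),
      S₀.map A₁ ≤ S₁ → S₀.map A₂ ≤ S₁ →
      (∀ q : Fin n, S₁.map (C q) ≤ S₀) →
      ((S₀ ≤ LinearMap.ker e →
          (2 * c : ℤ) * (finrank ℂ S₀ : ℤ) + (1 - 2 * c) * (finrank ℂ S₁ : ℤ) ≤ 0) ∧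
       ((∀ q, LinearMap.range (f q) ≤ S₀) →
          (2 * c : ℤ) * (finrank ℂ S₀ : ℤ) + (1 - 2 * c) * (finrank ℂ S₁ : ℤ) ≤ c))) :
    ∃ ν₁ ν₂ : ℂ, Function.Bijective (ν₁ • A₁ + ν₂ • A₂) := by
  by_contra! hsing
  have hQ : SatisfiesQ1 A₁ A₂ C e f :=
    ⟨fun k _ => hQ1a ⟨k, by omega⟩, fun k _ => hQ1b ⟨k, by omega⟩⟩
  have hV : finrank ℂ V₀ = finrank ℂ V₁ := hV₀.trans hV₁.symm
  have hθ {s₀ s₁ : ℕ} (hs : s₁ < s₀) : (c : ℤ) < 2 * c * s₀ + (1 - 2 * c) * s₁ := by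
    nlinarith [(by exact_mod_cast hs : (s₁ : ℤ) + 1 ≤ s₀), (by exact_mod_cast hc : (1 : ℤ) ≤ c)]
  by_cases he : pencilChainSpan A₁ A₂ ≤ LinearMap.ker e
  · obtain ⟨u, hu, i, hui⟩ := exists_isPencilChain_of_not_bijective hV hsing
    obtain ⟨S₀, S₁, ⟨hA₁, hA₂, hC⟩, hS₀, hlt⟩ :=
      exists_isSubrepresentation_le_ker hn hQ he hu hui
    have := (hss S₀ S₁ hA₁ hA₂ hC).1 hS₀
    linarith [hθ hlt]
  · obtain ⟨S₀, S₁, ⟨hA₁, hA₂, hC⟩, hf, hlt⟩ :=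
      exists_isSubrepresentation_range_le hV hW hn hQ hsing he
    have := (hss S₀ S₁ hA₁ hA₂ hC).2 hf
    linarith [hθ hlt]
end

section
/- (Lemma 4.1) Let c ≥ 1 and let (A₁,A₂) be a (c,c)-dimensional representation of the Kronecker quiver Q_K with two arrows. Then (A₁,A₂) is θ_c-semistable if and only if the matrix pencil A₁ + λA₂ is regular, i.e., there exist ν₁, ν₂ ∈ ℂ such that ν₁A₁ + ν₂A₂ : V₀ → V₁ is bijective. -/
/-!
For a subrepresentation `(S₀, S₁)` of a `(c, c)`-dimensional Kronecker representation with
`dim S₀ + dim S₁ > 0`, the θ_c-slope is at most `1/2` iff `dim S₀ ≤ dim S₁`. So semistability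
says that every `S₀` satisfies `dim S₀ ≤ dim (A₁ S₀ + A₂ S₀)`, a Hall-type expansion condition.
An injective combination `ν₁ A₁ + ν₂ A₂` clearly forces it. Conversely, by induction on `c`: if
`A₂` is not bijective, take `v ≠ 0` in its kernel; expansion gives `A₁ v ≠ 0`, and the condition
descends to the quotient pencil on `V₀ / ⟨v⟩ → V₁ / ⟨A₁ v⟩`. A bijective combination there can be
perturbed, since only finitely many `t` make `t • B + D` singular when `D` is invertible, to one
with nonzero `A₁`-coefficient, and this lifts to a bijective combination upstairs.
-/

open Module Function Submodule

theorem thetaSlope_le_half_iff {a b c : ℕ} (ha : a ≤ c) (hb : b ≤ c) (hab : 0 < a + b) :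
    ((2 * c : ℝ) * a + (1 - 2 * c) * b) / (a + b) ≤ 1 / 2 ↔ a ≤ b := by
  have hc : (1 : ℝ) ≤ c := by exact_mod_cast (show 1 ≤ c by omega)
  have hab' : (0 : ℝ) < a + b := by exact_mod_cast hab
  rw [div_le_iff₀ hab', ← Nat.cast_le (α := ℝ)]
  constructor <;> intro h <;> nlinarith

section Quotient

variable {R M M₂ : Type*} [Ring R] [AddCommGroup M] [Module R M] [AddCommGroup M₂] [Module R M₂]

theorem LinearMap.injective_of_injective_of_comp_mkQ {p : Submodule R M} {q : Submodule R M₂}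
    {f : M →ₗ[R] M₂} {g : M ⧸ p →ₗ[R] M₂ ⧸ q} (hg : Injective g)
    (hgf : g ∘ₗ p.mkQ = q.mkQ ∘ₗ f) (hp : Disjoint p (LinearMap.ker f)) : Injective f := by
  refine (injective_iff_map_eq_zero f).mpr fun x hx => ?_
  have hgx : g (p.mkQ x) = g 0 := by
    rw [← LinearMap.comp_apply, hgf, LinearMap.comp_apply, hx, map_zero, map_zero]
  exact LinearMap.disjoint_ker.mp hp x ((Quotient.mk_eq_zero p).mp (hg hgx)) hx

end Quotient

variable {K V W : Type*} [Field K] [AddCommGroup V] [Module K V] [AddCommGroup W] [Module K W]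

theorem Submodule.finrank_map_mkQ_add_finrank [FiniteDimensional K V] {p S : Submodule K V}
    (h : p ≤ S) : finrank K (S.map p.mkQ) + finrank K p = finrank K S := by
  have := LinearMap.finrank_range_add_finrank_ker (p.mkQ ∘ₗ S.subtype)
  rwa [LinearMap.range_comp, range_subtype, LinearMap.ker_comp, ker_mkQ,
    (comapSubtypeEquivOfLe h).finrank_eq] at this

theorem LinearMap.bijective_of_injective_of_finrank_eq [FiniteDimensional K V]
    [FiniteDimensional K W] (h : finrank K V = finrank K W) {f : V →ₗ[K] W} (hf : Injective f) :
    Bijective f :=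
  ⟨hf, (LinearMap.injective_iff_surjective_of_finrank_eq_finrank h).mp hf⟩

theorem finite_setOf_not_bijective_smul_add [FiniteDimensional K V] (A : V →ₗ[K] W)
    (D : V ≃ₗ[K] W) : {t : K | ¬Bijective ⇑(t • A + D.toLinearMap)}.Finite := by
  set C : End K V := D.symm.toLinearMap ∘ₗ A
  refine ((End.finite_spectrum C).preimage (neg_injective.comp inv_injective).injOn).subset ?_
  intro t ht
  by_cases h0 : t = 0
  · simp [h0, D.bijective] at ht
  intro hunit
  apply ht
  have hfactor : t • A + D.toLinearMap = D.toLinearMap ∘ₗ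
      (algebraMap K (End K V) (-t) * (algebraMap K (End K V) (-t⁻¹) - C)) := by
    ext x
    simp [C, smul_sub, smul_smul, h0]
  rw [hfactor]
  exact D.bijective.comp ((End.isUnit_iff _).mp
    (((neg_ne_zero.mpr h0).isUnit.map _).mul (spectrum.mem_resolventSet_iff.mp hunit)))

theorem exists_ne_zero_bijective_smul_add [Infinite K] [FiniteDimensional K V] {A B : V →ₗ[K] W}
    {ν : K} (h : Bijective ⇑(ν • A + B)) : ∃ s : K, s ≠ 0 ∧ Bijective ⇑(s • A + B) := by
  obtain ⟨t, ht⟩ := ((finite_setOf_not_bijective_smul_add A (LinearEquiv.ofBijective _ h)).union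
    (Set.finite_singleton (-ν))).infinite_compl.nonempty
  simp only [Set.mem_compl_iff, Set.mem_union, Set.mem_ofPred_eq, Set.mem_singleton_iff,
    not_or, not_not] at ht
  refine ⟨t + ν, fun h0 => ht.2 (eq_neg_of_add_eq_zero_left h0), ?_⟩
  convert ht.1 using 2
  ext x
  simp [add_smul, add_assoc]

def IsExpandingPair (A₁ A₂ : V →ₗ[K] W) : Prop :=
  ∀ S : Submodule K V, finrank K S ≤ finrank K ↥(S.map A₁ ⊔ S.map A₂)

namespace IsExpandingPair

variable {A₁ A₂ : V →ₗ[K] W}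

theorem of_injective [FiniteDimensional K W] {ν₁ ν₂ : K} (h : Injective ⇑(ν₁ • A₁ + ν₂ • A₂)) :
    IsExpandingPair A₁ A₂ := by
  intro S
  calc finrank K S = finrank K (S.map (ν₁ • A₁ + ν₂ • A₂)) :=
        (equivMapOfInjective _ h S).finrank_eq
    _ ≤ finrank K ↥(S.map A₁ ⊔ S.map A₂) := by
        refine finrank_mono ?_
        rintro _ ⟨x, hx, rfl⟩
        exact add_mem_sup (smul_mem _ _ (mem_map_of_mem hx)) (smul_mem _ _ (mem_map_of_mem hx))

theorem finrank_le [FiniteDimensional K W] (h : IsExpandingPair A₁ A₂) {S₀ : Submodule K V}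
    {S₁ : Submodule K W} (h₁ : S₀.map A₁ ≤ S₁) (h₂ : S₀.map A₂ ≤ S₁) :
    finrank K S₀ ≤ finrank K S₁ :=
  (h S₀).trans (finrank_mono (sup_le h₁ h₂))

theorem disjoint_ker [FiniteDimensional K V] [FiniteDimensional K W]
    (h : IsExpandingPair A₁ A₂) : Disjoint (LinearMap.ker A₁) (LinearMap.ker A₂) := by
  have := h (LinearMap.ker A₁ ⊓ LinearMap.ker A₂)
  rwa [LinearMap.le_ker_iff_map.mp inf_le_left, LinearMap.le_ker_iff_map.mp inf_le_right,
    sup_bot_eq, finrank_bot, Nat.le_zero, finrank_eq_zero, ← disjoint_iff] at this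

theorem mapQ [FiniteDimensional K V] [FiniteDimensional K W] (h : IsExpandingPair A₁ A₂)
    {p : Submodule K V} {q : Submodule K W} (h₁ : p ≤ q.comap A₁) (h₂ : p ≤ q.comap A₂)
    (hq : q ≤ p.map A₁ ⊔ p.map A₂) (hdim : finrank K q ≤ finrank K p) :
    IsExpandingPair (p.mapQ q A₁ h₁) (p.mapQ q A₂ h₂) := by
  intro T
  set S := T.comap p.mkQ
  set U := S.map A₁ ⊔ S.map A₂
  have hpS : p ≤ S := p.ker_mkQ ▸ LinearMap.ker_le_comap p.mkQ
  have hqU : q ≤ U := hq.trans (sup_le_sup (map_mono hpS) (map_mono hpS))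
  have hST : S.map p.mkQ = T := map_comap_eq_of_surjective p.mkQ_surjective T
  have hUT : U.map q.mkQ = T.map (p.mapQ q A₁ h₁) ⊔ T.map (p.mapQ q A₂ h₂) := by
    rw [Submodule.map_sup, ← hST, ← map_comp, ← map_comp, ← map_comp,
      ← map_comp, mapQ_mkQ, mapQ_mkQ]
  have hS := finrank_map_mkQ_add_finrank hpS
  have hU := finrank_map_mkQ_add_finrank hqU
  rw [hST] at hS
  rw [hUT] at hU
  have : finrank K S ≤ finrank K U := h S
  omega

theorem exists_bijective [Infinite K] [FiniteDimensional K V] [FiniteDimensional K W]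
    (hVW : finrank K V = finrank K W) (h : IsExpandingPair A₁ A₂) :
    ∃ ν₁ ν₂ : K, Bijective ⇑(ν₁ • A₁ + ν₂ • A₂) := by
  obtain ⟨n, hn⟩ : ∃ n, finrank K V = n := ⟨_, rfl⟩
  induction n generalizing V W with
  | zero =>
    have : Subsingleton V := finrank_zero_iff.mp hn
    exact ⟨0, 0, LinearMap.bijective_of_injective_of_finrank_eq hVW (injective_of_subsingleton _)⟩
  | succ n ih =>
    by_cases hA₂ : Injective A₂
    · exact ⟨0, 1, by simpa using LinearMap.bijective_of_injective_of_finrank_eq hVW hA₂⟩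
    obtain ⟨v, hv, hv0⟩ := (Submodule.ne_bot_iff _).mp (mt LinearMap.ker_eq_bot.mp hA₂)
    have hA₂v : A₂ v = 0 := hv
    have hA₁v : A₁ v ≠ 0 := fun h0 => hv0 (h.disjoint_ker.le_bot ⟨h0, hA₂v⟩)
    set p := K ∙ v
    set q := K ∙ A₁ v
    have h₁ : p ≤ q.comap A₁ := (span_singleton_le_iff_mem _ _).mpr (mem_span_singleton_self _)
    have h₂ : p ≤ q.comap A₂ := (span_singleton_le_iff_mem _ _).mpr (by simp [hA₂v])
    have hq : q ≤ p.map A₁ ⊔ p.map A₂ := (span_singleton_le_iff_mem _ _).mpr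
      (mem_sup_left (mem_map_of_mem (mem_span_singleton_self v)))
    have hp1 : finrank K p = 1 := finrank_span_singleton hv0
    have hq1 : finrank K q = 1 := finrank_span_singleton hA₁v
    have hpn : finrank K (V ⧸ p) = n := by have := p.finrank_quotient_add_finrank; omega
    have hqn : finrank K (W ⧸ q) = n := by have := q.finrank_quotient_add_finrank; omega
    obtain ⟨ν₁, ν₂, hbij⟩ :=
      ih (hpn.trans hqn.symm) (h.mapQ h₁ h₂ hq (hq1.trans hp1.symm).le) hpn
    -- `s ≠ 0` is what keeps `s • A₁ + ν₂ • A₂` injective on `K ∙ v ⊆ ker A₂`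
    obtain ⟨s, hs0, hsbij⟩ := exists_ne_zero_bijective_smul_add hbij
    refine ⟨s, ν₂, LinearMap.bijective_of_injective_of_finrank_eq hVW ?_⟩
    refine LinearMap.injective_of_injective_of_comp_mkQ hsbij.injective ?_ ?_
    · ext x
      simp [mapQ_apply]
    · refine ((disjoint_span_singleton' hv0).mpr ?_).symm
      simpa [hA₂v] using ⟨hs0, hA₁v⟩

end IsExpandingPair

theorem isExpandingPair_iff_exists_bijective [Infinite K] [FiniteDimensional K V]
    [FiniteDimensional K W] (hVW : finrank K V = finrank K W) {A₁ A₂ : V →ₗ[K] W} :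
    IsExpandingPair A₁ A₂ ↔ ∃ ν₁ ν₂ : K, Bijective ⇑(ν₁ • A₁ + ν₂ • A₂) :=
  ⟨IsExpandingPair.exists_bijective hVW, fun ⟨_, _, h⟩ => IsExpandingPair.of_injective h.injective⟩

theorem stmt_4_general (c : ℕ)
    (V₀ V₁ : Type) [AddCommGroup V₀] [Module ℂ V₀] [FiniteDimensional ℂ V₀]
    [AddCommGroup V₁] [Module ℂ V₁] [FiniteDimensional ℂ V₁]
    (hV₀ : finrank ℂ V₀ = c) (hV₁ : finrank ℂ V₁ = c)
    (A₁ A₂ : V₀ →ₗ[ℂ] V₁) :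
    -- θ_c-semistability
    (∀ (S₀ : Submodule ℂ V₀) (S₁ : Submodule ℂ V₁),
      S₀.map A₁ ≤ S₁ → S₀.map A₂ ≤ S₁ →
      ¬(S₀ = ⊥ ∧ S₁ = ⊥) → ¬(S₀ = ⊤ ∧ S₁ = ⊤) →
      ((2 * c : ℝ) * (finrank ℂ S₀ : ℝ) + (1 - 2 * c) * (finrank ℂ S₁ : ℝ)) /
        ((finrank ℂ S₀ : ℝ) + (finrank ℂ S₁ : ℝ)) ≤ 1 / 2)
    ↔
    -- regularity of the pencil A₁ + λA₂
    (∃ ν₁ ν₂ : ℂ, Function.Bijective (ν₁ • A₁ + ν₂ • A₂)) := by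
  rw [← isExpandingPair_iff_exists_bijective (hV₀.trans hV₁.symm)]
  have hS₀c (S₀ : Submodule ℂ V₀) : finrank ℂ S₀ ≤ c := hV₀ ▸ S₀.finrank_le
  have hS₁c (S₁ : Submodule ℂ V₁) : finrank ℂ S₁ ≤ c := hV₁ ▸ S₁.finrank_le
  constructor
  · intro hss S₀
    by_cases htop : S₀.map A₁ ⊔ S₀.map A₂ = ⊤
    · rw [htop, finrank_top, hV₁]
      exact hS₀c S₀
    by_cases hbot : S₀ = ⊥
    · rw [hbot, finrank_bot]
      exact Nat.zero_le _
    have hpos : 0 < finrank ℂ S₀ + finrank ℂ ↥(S₀.map A₁ ⊔ S₀.map A₂) := by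
      have := Submodule.finrank_eq_zero.not.mpr hbot
      omega
    exact (thetaSlope_le_half_iff (hS₀c _) (hS₁c _) hpos).mp
      (hss _ _ le_sup_left le_sup_right (fun h => hbot h.1) (fun h => htop h.2))
  · intro h S₀ S₁ h₁ h₂ hne _
    have hpos : 0 < finrank ℂ S₀ + finrank ℂ S₁ := by
      by_contra! h0
      exact hne ⟨finrank_eq_zero.mp (by omega), finrank_eq_zero.mp (by omega)⟩
    exact (thetaSlope_le_half_iff (hS₀c S₀) (hS₁c S₁) hpos).mpr (h.finrank_le h₁ h₂)

/-- (Lemma 4.1) A (c,c)-dimensional representation (A₁,A₂) of the 2-Kronecker quiver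
is θ_c-semistable if and only if the matrix pencil A₁ + λA₂ is regular. -/
theorem stmt_4 (c : ℕ) (hc : 1 ≤ c)
    (V₀ V₁ : Type) [AddCommGroup V₀] [Module ℂ V₀] [FiniteDimensional ℂ V₀]
    [AddCommGroup V₁] [Module ℂ V₁] [FiniteDimensional ℂ V₁]
    (hV₀ : finrank ℂ V₀ = c) (hV₁ : finrank ℂ V₁ = c)
    (A₁ A₂ : V₀ →ₗ[ℂ] V₁) :
    -- θ_c-semistability
    (∀ (S₀ : Submodule ℂ V₀) (S₁ : Submodule ℂ V₁),
      S₀.map A₁ ≤ S₁ → S₀.map A₂ ≤ S₁ →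
      ¬(S₀ = ⊥ ∧ S₁ = ⊥) → ¬(S₀ = ⊤ ∧ S₁ = ⊤) →
      ((2 * c : ℝ) * (finrank ℂ S₀ : ℝ) + (1 - 2 * c) * (finrank ℂ S₁ : ℝ)) /
        ((finrank ℂ S₀ : ℝ) + (finrank ℂ S₁ : ℝ)) ≤ 1 / 2)
    ↔
    -- regularity of the pencil A₁ + λA₂
    (∃ ν₁ ν₂ : ℂ, Function.Bijective (ν₁ • A₁ + ν₂ • A₂)) :=
  stmt_4_general c V₀ V₁ hV₀ hV₁ A₁ A₂
end

section
/- (Key inclusion (3.16) in the proof of Proposition 3.5) Let (A₁,A₂;B₁,…,B_{n−1};D₂,…,D_n;e;f₁,…,f_{n−1}) be a (c,c)-dimensional framed representation of Λ'_n, and let v₀, …, v_ε ∈ V₀ satisfy A₁v₀ = 0, A₁v_α = A₂v_{α−1} for α = 1, …, ε, A₂v_ε = 0, and e(v₀) = 1. Define subspaces U₀ = span(v₀,…,v_ε) ⊆ V₀, U_{2k+1} = A₁(U_{2k}) + A₂(U_{2k}) ⊆ V₁ for k ≥ 0, and U_{2k} = Σ_{q=1}^{n−1} B_q(U_{2k−1})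 + Σ_{q=2}^{n} D_q(U_{2k−1}) ⊆ V₀ for k ≥ 1. Then U₁ = A₁(U₀), and for every k ≥ 1 one has U_{2k+1} ⊆ Σ_{l=1}^{k} A₁(U_{2l}). -/
open Module Submodule

/-!
A₂ maps the chain v₀, …, v_ε into A₁(U₀) (A₂v_α = A₁v_{α+1}, A₂v_ε = 0), so U₁ = A₁(U₀). For the
inclusion, A₂ applied to D_q(U_{2k-1}) is A₁ B_q(U_{2k-1}) ⊆ A₁(U_{2k}) by the first relation,
while on B_q A₁(U_{2l}) the second relation gives
A₂ B_q A₁ y = A₁ B_q A₂ y − e(y) A₂ f_q(1) with A₂ f_q(1) = A₁ B_q A₂ v₀ ∈ A₁(U₂) because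
e(v₀) = 1 and A₁ v₀ = 0. Induction on k then bounds U_{2k+1} by Σ_{l ≤ k} A₁(U_{2l}), and the
term l = 0 disappears after one more step.
-/

variable {R M₀ M₁ ι : Type*} [CommRing R] [AddCommGroup M₀] [Module R M₀]
  [AddCommGroup M₁] [Module R M₁]

theorem map_span_range_le_of_chain (A₁ A₂ : M₀ →ₗ[R] M₁) {ε : ℕ} (v : Fin (ε + 1) → M₀)
    (hvrec : ∀ α : Fin ε, A₁ (v α.succ) = A₂ (v α.castSucc))
    (hvlast : A₂ (v (Fin.last ε)) = 0) :
    (span R (Set.range v)).map A₂ ≤ (span R (Set.range v)).map A₁ := by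
  rw [Submodule.map_span, span_le]
  rintro _ ⟨_, ⟨i, rfl⟩, rfl⟩
  induction i using Fin.lastCases with
  | last => rw [hvlast]; exact zero_mem _
  | cast α => rw [← hvrec α]; exact mem_map_of_mem (subset_span ⟨α.succ, rfl⟩)

section Relations

variable {A₁ A₂ : M₀ →ₗ[R] M₁} {B D : M₁ →ₗ[R] M₀} {e : M₀ →ₗ[R] R} {f : R →ₗ[R] M₀}

theorem A₂_B_A₁_apply (hAD : A₂ ∘ₗ D = A₁ ∘ₗ B) (hDA : D ∘ₗ A₂ = B ∘ₗ A₁ + f ∘ₗ e) (y : M₀) :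
    A₂ (B (A₁ y)) = A₁ (B (A₂ y)) - e y • A₂ (f 1) := by
  have hB : B (A₁ y) = D (A₂ y) - e y • f 1 := by
    rw [← map_smul, smul_eq_mul, mul_one, eq_sub_iff_add_eq]
    exact (LinearMap.congr_fun hDA y).symm
  rw [hB, map_sub, map_smul, ← LinearMap.comp_apply A₂ D, hAD, LinearMap.comp_apply]

theorem A₂_f_one_eq (hAD : A₂ ∘ₗ D = A₁ ∘ₗ B) (hDA : D ∘ₗ A₂ = B ∘ₗ A₁ + f ∘ₗ e) {v₀ : M₀}
    (hA₁v₀ : A₁ v₀ = 0) (hev₀ : e v₀ = 1) : A₂ (f 1) = A₁ (B (A₂ v₀)) := by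
  have := A₂_B_A₁_apply hAD hDA v₀
  rw [hA₁v₀, hev₀, one_smul, map_zero, map_zero, eq_comm, sub_eq_zero] at this
  exact this.symm

end Relations

/-- `Ueven k` and `Uodd k` play the roles of `U_{2k}` and `U_{2k+1}`. -/
structure IsZigzag (A₁ A₂ : M₀ →ₗ[R] M₁) (B D : ι → M₁ →ₗ[R] M₀)
    (Ueven : ℕ → Submodule R M₀) (Uodd : ℕ → Submodule R M₁) : Prop where
  odd : ∀ k, Uodd k = (Ueven k).map A₁ ⊔ (Ueven k).map A₂
  even : ∀ k, Ueven (k + 1) = (⨆ q, (Uodd k).map (B q)) ⊔ (⨆ q, (Uodd k).map (D q))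

namespace IsZigzag

variable {A₁ A₂ : M₀ →ₗ[R] M₁} {B D : ι → M₁ →ₗ[R] M₀} {e : M₀ →ₗ[R] R}
  {f : ι → R →ₗ[R] M₀} {Ueven : ℕ → Submodule R M₀} {Uodd : ℕ → Submodule R M₁}

theorem map_A₂_le (h : IsZigzag A₁ A₂ B D Ueven Uodd) (k : ℕ) :
    (Ueven k).map A₂ ≤ Uodd k :=
  h.odd k ▸ le_sup_right

theorem map_B_le (h : IsZigzag A₁ A₂ B D Ueven Uodd) (k : ℕ) (q : ι) :
    (Uodd k).map (B q) ≤ Ueven (k + 1) :=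
  h.even k ▸ le_sup_of_le_left (le_iSup (fun q => (Uodd k).map (B q)) q)

theorem B_A₂_mem (h : IsZigzag A₁ A₂ B D Ueven Uodd) (q : ι) {k : ℕ} {y : M₀}
    (hy : y ∈ Ueven k) : B q (A₂ y) ∈ Ueven (k + 1) :=
  h.map_B_le k q (mem_map_of_mem (h.map_A₂_le k (mem_map_of_mem hy)))

theorem map_A₂_map_B_map_A₁_le (h : IsZigzag A₁ A₂ B D Ueven Uodd)
    (hAD : ∀ q, A₂ ∘ₗ D q = A₁ ∘ₗ B q) (hDA : ∀ q, D q ∘ₗ A₂ = B q ∘ₗ A₁ + f q ∘ₗ e)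
    (hf : ∀ q, A₂ (f q 1) ∈ (Ueven 1).map A₁) (q : ι) (l : ℕ) :
    (((Ueven l).map A₁).map (B q)).map A₂ ≤ (Ueven (l + 1)).map A₁ ⊔ (Ueven 1).map A₁ := by
  rintro _ ⟨_, ⟨_, ⟨y, hy, rfl⟩, rfl⟩, rfl⟩
  rw [A₂_B_A₁_apply (hAD q) (hDA q)]
  exact sub_mem (mem_sup_left (mem_map_of_mem (h.B_A₂_mem q hy)))
    (smul_mem _ _ (mem_sup_right (hf q)))

theorem odd_succ_le (h : IsZigzag A₁ A₂ B D Ueven Uodd)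
    (hAD : ∀ q, A₂ ∘ₗ D q = A₁ ∘ₗ B q) (hDA : ∀ q, D q ∘ₗ A₂ = B q ∘ₗ A₁ + f q ∘ₗ e)
    (hf : ∀ q, A₂ (f q 1) ∈ (Ueven 1).map A₁) {m : ℕ}
    (hm : Uodd m ≤ ⨆ l ∈ Finset.Icc 0 m, (Ueven l).map A₁) :
    Uodd (m + 1) ≤ ⨆ l ∈ Finset.Icc 1 (m + 1), (Ueven l).map A₁ := by
  set T := ⨆ l ∈ Finset.Icc 1 (m + 1), (Ueven l).map A₁
  have hT : ∀ l ∈ Finset.Icc 1 (m + 1), (Ueven l).map A₁ ≤ T := fun l hl =>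
    le_iSup₂_of_le l hl le_rfl
  have hB : ∀ q, ((Uodd m).map (B q)).map A₂ ≤ T := fun q => calc
    _ ≤ ((⨆ l ∈ Finset.Icc 0 m, (Ueven l).map A₁).map (B q)).map A₂ := map_mono (map_mono hm)
    _ ≤ T := by
      rw [map_le_iff_le_comap, map_le_iff_le_comap, iSup₂_le_iff]
      intro l hl
      rw [← map_le_iff_le_comap, ← map_le_iff_le_comap]
      simp only [Finset.mem_Icc] at hl
      exact (h.map_A₂_map_B_map_A₁_le hAD hDA hf q l).trans
        (sup_le (hT _ (by simp; omega)) (hT 1 (by simp)))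
  have hD : ∀ q, ((Uodd m).map (D q)).map A₂ ≤ T := fun q => by
    rw [← map_comp, hAD q, map_comp]
    exact (map_mono (h.map_B_le m q)).trans (hT _ (by simp))
  rw [h.odd (m + 1)]
  refine sup_le (hT _ (by simp)) ?_
  rw [h.even m, Submodule.map_sup, Submodule.map_iSup, Submodule.map_iSup]
  exact sup_le (iSup_le hB) (iSup_le hD)

theorem odd_le_iSup (h : IsZigzag A₁ A₂ B D Ueven Uodd)
    (hAD : ∀ q, A₂ ∘ₗ D q = A₁ ∘ₗ B q) (hDA : ∀ q, D q ∘ₗ A₂ = B q ∘ₗ A₁ + f q ∘ₗ e)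
    (hf : ∀ q, A₂ (f q 1) ∈ (Ueven 1).map A₁) (h₀ : (Ueven 0).map A₂ ≤ (Ueven 0).map A₁)
    (k : ℕ) : Uodd k ≤ ⨆ l ∈ Finset.Icc 0 k, (Ueven l).map A₁ := by
  induction k with
  | zero => rw [h.odd 0, sup_eq_left.mpr h₀]; exact le_iSup₂_of_le 0 (by simp) le_rfl
  | succ m ih =>
    exact (h.odd_succ_le hAD hDA hf ih).trans
      (biSup_mono fun l hl => by simp only [Finset.mem_Icc] at hl ⊢; omega)

end IsZigzag

theorem stmt_11_general (n : ℕ)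
    (V₀ V₁ : Type) [AddCommGroup V₀] [Module ℂ V₀]
    [AddCommGroup V₁] [Module ℂ V₁]
    (A₁ A₂ : V₀ →ₗ[ℂ] V₁)
    (B D : Fin (n - 1) → (V₁ →ₗ[ℂ] V₀))
    (e : V₀ →ₗ[ℂ] ℂ) (f : Fin (n - 1) → (ℂ →ₗ[ℂ] V₀))
    (hQ1'a : ∀ q, A₂ ∘ₗ D q = A₁ ∘ₗ B q)
    (hQ1'b : ∀ q, D q ∘ₗ A₂ = B q ∘ₗ A₁ + f q ∘ₗ e)
    (ε : ℕ) (v : Fin (ε + 1) → V₀)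
    (hv0 : A₁ (v 0) = 0)
    (hvrec : ∀ α : Fin ε, A₁ (v α.succ) = A₂ (v α.castSucc))
    (hvlast : A₂ (v (Fin.last ε)) = 0)
    (hev0 : e (v 0) = 1)
    -- the subspaces U_j, j ≥ 0, with Ueven k = U_{2k} and Uodd k = U_{2k+1}
    (Ueven : ℕ → Submodule ℂ V₀) (Uodd : ℕ → Submodule ℂ V₁)
    (hU0 : Ueven 0 = Submodule.span ℂ (Set.range v))
    (hUodd : ∀ k, Uodd k = (Ueven k).map A₁ ⊔ (Ueven k).map A₂)
    (hUeven : ∀ k, Ueven (k + 1) =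
      (⨆ q : Fin (n - 1), (Uodd k).map (B q)) ⊔
      (⨆ q : Fin (n - 1), (Uodd k).map (D q))) :
    Uodd 0 = (Ueven 0).map A₁ ∧
    ∀ k : ℕ, 1 ≤ k → Uodd k ≤ ⨆ l ∈ Finset.Icc 1 k, (Ueven l).map A₁ := by
  have hz : IsZigzag A₁ A₂ B D Ueven Uodd := ⟨hUodd, hUeven⟩
  have hv₀ : v 0 ∈ Ueven 0 := hU0 ▸ subset_span ⟨0, rfl⟩
  have h₀ : (Ueven 0).map A₂ ≤ (Ueven 0).map A₁ :=
    hU0 ▸ map_span_range_le_of_chain A₁ A₂ v hvrec hvlast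
  have hf : ∀ q, A₂ (f q 1) ∈ (Ueven 1).map A₁ := fun q => by
    rw [A₂_f_one_eq (hQ1'a q) (hQ1'b q) hv0 hev0]
    exact mem_map_of_mem (hz.B_A₂_mem q hv₀)
  refine ⟨by rw [hUodd 0, sup_eq_left.mpr h₀], fun k hk => ?_⟩
  obtain ⟨m, rfl⟩ := Nat.exists_eq_add_of_le' hk
  exact hz.odd_succ_le hQ1'a hQ1'b hf (hz.odd_le_iSup hQ1'a hQ1'b hf h₀ m)

/-- (Key inclusion (3.16) in the proof of Proposition 3.5) Given a (c,c)-dimensional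
framed representation of Λ'_n (with W identified with ℂ) and vectors v₀,…,v_ε with
A₁v₀ = 0, A₁v_α = A₂v_{α−1}, A₂v_ε = 0 and e(v₀) = 1, the subspaces
U₀ = span(v₀,…,v_ε), U_{2k+1} = A₁(U_{2k}) + A₂(U_{2k}), and
U_{2k} = Σ_q B_q(U_{2k−1}) + Σ_q D_q(U_{2k−1}) satisfy U₁ = A₁(U₀) and
U_{2k+1} ⊆ Σ_{l=1}^{k} A₁(U_{2l}) for every k ≥ 1. -/
theorem stmt_11 (n c : ℕ) (hn : 2 ≤ n) (hc : 1 ≤ c)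
    (V₀ V₁ : Type) [AddCommGroup V₀] [Module ℂ V₀] [FiniteDimensional ℂ V₀]
    [AddCommGroup V₁] [Module ℂ V₁] [FiniteDimensional ℂ V₁]
    (hV₀ : finrank ℂ V₀ = c) (hV₁ : finrank ℂ V₁ = c)
    (A₁ A₂ : V₀ →ₗ[ℂ] V₁)
    (B D : Fin (n - 1) → (V₁ →ₗ[ℂ] V₀))
    (e : V₀ →ₗ[ℂ] ℂ) (f : Fin (n - 1) → (ℂ →ₗ[ℂ] V₀))
    (hQ1'a : ∀ q, A₂ ∘ₗ D q = A₁ ∘ₗ B q)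
    (hQ1'b : ∀ q, D q ∘ₗ A₂ = B q ∘ₗ A₁ + f q ∘ₗ e)
    (ε : ℕ) (v : Fin (ε + 1) → V₀)
    (hv0 : A₁ (v 0) = 0)
    (hvrec : ∀ α : Fin ε, A₁ (v α.succ) = A₂ (v α.castSucc))
    (hvlast : A₂ (v (Fin.last ε)) = 0)
    (hev0 : e (v 0) = 1)
    -- the subspaces U_j, j ≥ 0, with Ueven k = U_{2k} and Uodd k = U_{2k+1}
    (Ueven : ℕ → Submodule ℂ V₀) (Uodd : ℕ → Submodule ℂ V₁)
    (hU0 : Ueven 0 = Submodule.span ℂ (Set.range v))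
    (hUodd : ∀ k, Uodd k = (Ueven k).map A₁ ⊔ (Ueven k).map A₂)
    (hUeven : ∀ k, Ueven (k + 1) =
      (⨆ q : Fin (n - 1), (Uodd k).map (B q)) ⊔
      (⨆ q : Fin (n - 1), (Uodd k).map (D q))) :
    Uodd 0 = (Ueven 0).map A₁ ∧
    ∀ k : ℕ, 1 ≤ k → Uodd k ≤ ⨆ l ∈ Finset.Icc 1 k, (Ueven l).map A₁ :=
  stmt_11_general n V₀ V₁ A₁ A₂ B D e f hQ1'a hQ1'b ε v hv0 hvrec hvlast hev0 Ueven Uodd hU0 hUodd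
    hUeven
end

section
/- (Chamber claim in Remark 3.3) Let n ≥ 2, c ≥ 1, and let θ = (θ₀, θ₁) ∈ ℝ² satisfy θ₀ > 0 and −θ₀ < θ₁ < −((c−1)/c)·θ₀ (i.e., θ lies in the open cone Γ_c). Then a (c,c)-dimensional framed representation of Λ_n is θ-semistable if and only if it is θ_c-semistable, where θ_c = (2c, 1−2c); that is, the set of semistable representations does not change as the stability parameter varies inside Γ_c. -/
/-!
For θ in the cone Γ_c, writing s = θ₀ + θ₁, we have 0 < s and s·c < θ₀. For dimension vectors
(a, b) of a subrepresentation, with b ≤ c, these two inequalities make the sign of θ₀a + θ₁b and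
its comparison with s·c depend only on the combinatorics of (a, b): the first is ≤ 0 iff a < b or
a = b = 0, the second holds iff a ≤ b. So every semistability condition reads the same for all
θ ∈ Γ_c, and θ_c = (2c, 1 − 2c) lies in Γ_c.
-/

open Module

-- The paper's Γ_c = {θ₀ > 0, −θ₀ < θ₁ < −((c−1)/c)·θ₀}, cleared of the division by c.
def chamber (c : ℕ) : Set (ℝ × ℝ) :=
  {θ | 0 < θ.1 + θ.2 ∧ (θ.1 + θ.2) * c < θ.1}

namespace chamber

variable {c : ℕ} {θ : ℝ × ℝ}

theorem mk_mem_of_lt {θ₀ θ₁ : ℝ} (hc : 1 ≤ c) (h₀ : -θ₀ < θ₁)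
    (h₁ : θ₁ < -(((c : ℝ) - 1) / c) * θ₀) : (θ₀, θ₁) ∈ chamber c := by
  have hc : (0 : ℝ) < c := by exact_mod_cast hc
  have h₁c : θ₁ * c < -((c - 1) * θ₀) := by
    simpa [neg_mul, div_mul_eq_mul_div, div_mul_cancel₀ _ hc.ne'] using
      mul_lt_mul_of_pos_right h₁ hc
  exact ⟨by simp only; linarith, by simp only; linarith⟩

theorem thetaC_mem (hc : 1 ≤ c) : ((2 * c : ℝ), (1 - 2 * c : ℝ)) ∈ chamber c := by
  have hc : (1 : ℝ) ≤ c := by exact_mod_cast hc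
  exact ⟨by simp only; linarith, by simp only; linarith⟩

theorem fst_pos (hθ : θ ∈ chamber c) : 0 < θ.1 :=
  (mul_nonneg hθ.1.le c.cast_nonneg).trans_lt hθ.2

theorem weight_nonpos_iff (hθ : θ ∈ chamber c) {a b : ℕ} (hb : b ≤ c) :
    θ.1 * a + θ.2 * b ≤ 0 ↔ a < b ∨ a = 0 ∧ b = 0 := by
  have h₀ := fst_pos hθ
  obtain ⟨hs, hsc⟩ := hθ
  constructor
  · intro h
    rcases Nat.eq_zero_or_pos b with rfl | hb₀
    · simp only [CharP.cast_eq_zero, mul_zero, add_zero] at h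
      exact .inr ⟨Nat.cast_nonpos.mp (nonpos_of_mul_nonpos_right h h₀), rfl⟩
    · refine .inl (lt_of_not_ge fun hba => h.not_gt ?_)
      calc 0 < (θ.1 + θ.2) * b := mul_pos hs (by exact_mod_cast hb₀)
        _ ≤ θ.1 * a + θ.2 * b := by
          linarith [mul_le_mul_of_nonneg_left (Nat.cast_le.mpr hba : (b : ℝ) ≤ a) h₀.le]
  · rintro (hab | ⟨rfl, rfl⟩)
    · have hab : (a : ℝ) ≤ b - 1 := by
        rw [le_sub_iff_add_le]; exact_mod_cast hab
      calc θ.1 * a + θ.2 * b ≤ θ.1 * (b - 1) + θ.2 * b := by gcongr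
        _ = (θ.1 + θ.2) * b - θ.1 := by ring
        _ ≤ (θ.1 + θ.2) * c - θ.1 := by gcongr
        _ ≤ 0 := by linarith
    · simp

theorem weight_le_iff (hθ : θ ∈ chamber c) {a b : ℕ} (hb : b ≤ c) :
    θ.1 * a + θ.2 * b ≤ (θ.1 + θ.2) * c ↔ a ≤ b := by
  have h₀ := fst_pos hθ
  obtain ⟨hs, hsc⟩ := hθ
  constructor
  · intro h
    refine le_of_not_gt fun hba => h.not_gt ?_
    have hba : (b : ℝ) + 1 ≤ a := by exact_mod_cast hba
    calc (θ.1 + θ.2) * c < (θ.1 + θ.2) * b + θ.1 := by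
          linarith [mul_nonneg hs.le b.cast_nonneg]
      _ = θ.1 * (b + 1) + θ.2 * b := by ring
      _ ≤ θ.1 * a + θ.2 * b := by gcongr
  · intro hab
    calc θ.1 * a + θ.2 * b ≤ θ.1 * b + θ.2 * b := by gcongr
      _ = (θ.1 + θ.2) * b := by ring
      _ ≤ (θ.1 + θ.2) * c := by gcongr

end chamber

/-- (Chamber claim in Remark 3.3) For θ = (θ₀,θ₁) in the open cone Γ_c, a
(c,c)-dimensional framed representation of Λ_n is θ-semistable iff it is
θ_c-semistable, where θ_c = (2c, 1−2c). -/
theorem stmt_13 (n c : ℕ) (hc : 1 ≤ c)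
    (θ₀ θ₁ : ℝ) (hθ₁ : -θ₀ < θ₁) (hθ₁' : θ₁ < -(((c : ℝ) - 1) / c) * θ₀)
    (V₀ V₁ W : Type) [AddCommGroup V₀] [Module ℂ V₀]
    [AddCommGroup V₁] [Module ℂ V₁] [FiniteDimensional ℂ V₁]
    [AddCommGroup W] [Module ℂ W]
    (hV₁ : finrank ℂ V₁ = c)
    (A₁ A₂ : V₀ →ₗ[ℂ] V₁)
    (C : Fin n → (V₁ →ₗ[ℂ] V₀))
    (e : V₀ →ₗ[ℂ] W) (f : Fin (n - 1) → (W →ₗ[ℂ] V₀)) :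
    -- θ-semistability
    (∀ (S₀ : Submodule ℂ V₀) (S₁ : Submodule ℂ V₁),
      S₀.map A₁ ≤ S₁ → S₀.map A₂ ≤ S₁ →
      (∀ q : Fin n, S₁.map (C q) ≤ S₀) →
      ((S₀ ≤ LinearMap.ker e →
          θ₀ * (finrank ℂ S₀ : ℝ) + θ₁ * (finrank ℂ S₁ : ℝ) ≤ 0) ∧
       ((∀ q, LinearMap.range (f q) ≤ S₀) →
          θ₀ * (finrank ℂ S₀ : ℝ) + θ₁ * (finrank ℂ S₁ : ℝ) ≤ (θ₀ + θ₁) * c)))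
    ↔
    -- θ_c-semistability, θ_c = (2c, 1−2c)
    (∀ (S₀ : Submodule ℂ V₀) (S₁ : Submodule ℂ V₁),
      S₀.map A₁ ≤ S₁ → S₀.map A₂ ≤ S₁ →
      (∀ q : Fin n, S₁.map (C q) ≤ S₀) →
      (((S₀ ≤ LinearMap.ker e →
          (2 * c : ℝ) * (finrank ℂ S₀ : ℝ) + (1 - 2 * c) * (finrank ℂ S₁ : ℝ) ≤ 0) ∧
       ((∀ q, LinearMap.range (f q) ≤ S₀) →
          (2 * c : ℝ) * (finrank ℂ S₀ : ℝ) + (1 - 2 * c) * (finrank ℂ S₁ : ℝ) ≤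
            ((2 * c : ℝ) + (1 - 2 * c)) * c)))) := by
  have hθ := chamber.mk_mem_of_lt hc hθ₁ hθ₁'
  have hθc := chamber.thetaC_mem hc
  refine forall₂_congr fun S₀ S₁ => imp_congr_right fun _ => imp_congr_right fun _ =>
    imp_congr_right fun _ => ?_
  have hS₁ : finrank ℂ S₁ ≤ c := hV₁ ▸ Submodule.finrank_le S₁
  exact and_congr
    (imp_congr_right fun _ =>
      (chamber.weight_nonpos_iff hθ hS₁).trans (chamber.weight_nonpos_iff hθc hS₁).symm)
    (imp_congr_right fun _ =>
      (chamber.weight_le_iff hθ hS₁).trans (chamber.weight_le_iff hθc hS₁).symm)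
end

section
/- (Semistability equals stability inside the chamber, Remark 3.3) Let n ≥ 2, c ≥ 1, and let θ = (θ₀, θ₁) ∈ ℝ² satisfy θ₀ > 0 and −θ₀ < θ₁ < −((c−1)/c)·θ₀. Then every θ-semistable (c,c)-dimensional framed representation of Λ_n is θ-stable: for every nonzero subrepresentation (S₀,S₁) with S₀ ⊆ ker e one has θ₀·dim S₀ + θ₁·dim S₁ < 0, and for every proper subrepresentation (S₀,S₁) ≠ (V₀,V₁) with Im f_q ⊆ S₀ for all q one has θ₀·dim S₀ + θ₁·dim S₁ < (θ₀+θ₁)·c. -/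
/-!
Semistability fails to be stability only through a subrepresentation whose weight
`θ₀ a + θ₁ b` (with `a, b ≤ c` its dimensions) attains the bound exactly. In the chamber
`(c - 1) / c < -θ₁ / θ₀ < 1`, so `θ₀ a + θ₁ b = 0` with `b ≥ 1` would force
`b - 1 ≤ b (c - 1) / c < a < b`, which no integer satisfies. The second condition reduces to
the first by passing to codimensions `c - a`, `c - b`.
-/

open Module

/-- The open cone `Γ_c` of the paper. -/
def InChamber (c : ℕ) (θ₀ θ₁ : ℝ) : Prop :=
  0 < θ₀ ∧ -θ₀ < θ₁ ∧ θ₁ < -(((c : ℝ) - 1) / c) * θ₀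

namespace InChamber

variable {c : ℕ} {θ₀ θ₁ : ℝ}

theorem eq_zero_of_weight_eq_zero (hθ : InChamber c θ₀ θ₁) {a b : ℕ} (hb : b ≤ c)
    (h : θ₀ * a + θ₁ * b = 0) : a = 0 ∧ b = 0 := by
  obtain ⟨hθ₀, hθ₁, hθ₁'⟩ := hθ
  rcases b.eq_zero_or_pos with rfl | hb_pos
  · simpa [hθ₀.ne'] using h
  exfalso
  have hbR : (0 : ℝ) < b := by exact_mod_cast hb_pos
  have hbc : (b : ℝ) ≤ c := by exact_mod_cast hb
  have hcR : (0 : ℝ) < c := hbR.trans_le hbc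
  have hlt : (a : ℝ) < b := by nlinarith
  have hθ₁c : (c : ℝ) * θ₁ < -((c - 1) * θ₀) := by
    have := mul_lt_mul_of_pos_left hθ₁' hcR
    rwa [neg_mul, mul_neg, ← mul_assoc, mul_div_cancel₀ _ hcR.ne'] at this
  -- `c * a = -(c * θ₁ / θ₀) * b > (c - 1) * b ≥ c * (b - 1)` since `b ≤ c`
  have hgt : (b : ℝ) - 1 < a := by nlinarith
  have : a < b := by exact_mod_cast hlt
  have : b < a + 1 := by exact_mod_cast (show (b : ℝ) < a + 1 by linarith)
  omega

variable {K V₀ V₁ : Type*} [Field K] [AddCommGroup V₀] [Module K V₀] [FiniteDimensional K V₀]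
  [AddCommGroup V₁] [Module K V₁] [FiniteDimensional K V₁]

theorem eq_bot_of_weight_eq_zero (hθ : InChamber c θ₀ θ₁) (hV₁ : finrank K V₁ = c)
    {S₀ : Submodule K V₀} {S₁ : Submodule K V₁}
    (h : θ₀ * (finrank K S₀ : ℝ) + θ₁ * (finrank K S₁ : ℝ) = 0) : S₀ = ⊥ ∧ S₁ = ⊥ := by
  obtain ⟨h₀, h₁⟩ := hθ.eq_zero_of_weight_eq_zero (hV₁ ▸ S₁.finrank_le) h
  exact ⟨Submodule.finrank_eq_zero.mp h₀, Submodule.finrank_eq_zero.mp h₁⟩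

theorem eq_top_of_weight_eq (hθ : InChamber c θ₀ θ₁)
    (hV₀ : finrank K V₀ = c) (hV₁ : finrank K V₁ = c)
    {S₀ : Submodule K V₀} {S₁ : Submodule K V₁}
    (h : θ₀ * (finrank K S₀ : ℝ) + θ₁ * (finrank K S₁ : ℝ) = (θ₀ + θ₁) * c) :
    S₀ = ⊤ ∧ S₁ = ⊤ := by
  have h₀ := hV₀ ▸ S₀.finrank_le
  have h₁ := hV₁ ▸ S₁.finrank_le
  have hcodim : θ₀ * ((c - finrank K S₀ : ℕ) : ℝ) + θ₁ * ((c - finrank K S₁ : ℕ) : ℝ) = 0 := by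
    rw [Nat.cast_sub h₀, Nat.cast_sub h₁]
    linarith
  obtain ⟨e₀, e₁⟩ := hθ.eq_zero_of_weight_eq_zero (Nat.sub_le c _) hcodim
  exact ⟨Submodule.eq_top_of_finrank_eq (by omega), Submodule.eq_top_of_finrank_eq (by omega)⟩

end InChamber

/-- (Semistability equals stability inside the chamber, Remark 3.3) For θ in the open
cone Γ_c, every θ-semistable (c,c)-dimensional framed representation of Λ_n is
θ-stable. -/
theorem stmt_14 (n c : ℕ)
    (θ₀ θ₁ : ℝ) (hθ₀ : 0 < θ₀) (hθ₁ : -θ₀ < θ₁) (hθ₁' : θ₁ < -(((c : ℝ) - 1) / c) * θ₀)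
    (V₀ V₁ W : Type) [AddCommGroup V₀] [Module ℂ V₀] [FiniteDimensional ℂ V₀]
    [AddCommGroup V₁] [Module ℂ V₁] [FiniteDimensional ℂ V₁]
    [AddCommGroup W] [Module ℂ W]
    (hV₀ : finrank ℂ V₀ = c) (hV₁ : finrank ℂ V₁ = c)
    (A₁ A₂ : V₀ →ₗ[ℂ] V₁)
    (C : Fin n → (V₁ →ₗ[ℂ] V₀))
    (e : V₀ →ₗ[ℂ] W) (f : Fin (n - 1) → (W →ₗ[ℂ] V₀))
    -- θ-semistability
    (hss : ∀ (S₀ : Submodule ℂ V₀) (S₁ : Submodule ℂ V₁),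
      S₀.map A₁ ≤ S₁ → S₀.map A₂ ≤ S₁ →
      (∀ q : Fin n, S₁.map (C q) ≤ S₀) →
      ((S₀ ≤ LinearMap.ker e →
          θ₀ * (finrank ℂ S₀ : ℝ) + θ₁ * (finrank ℂ S₁ : ℝ) ≤ 0) ∧
       ((∀ q, LinearMap.range (f q) ≤ S₀) →
          θ₀ * (finrank ℂ S₀ : ℝ) + θ₁ * (finrank ℂ S₁ : ℝ) ≤ (θ₀ + θ₁) * c))) :
    -- θ-stability
    ∀ (S₀ : Submodule ℂ V₀) (S₁ : Submodule ℂ V₁),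
      S₀.map A₁ ≤ S₁ → S₀.map A₂ ≤ S₁ →
      (∀ q : Fin n, S₁.map (C q) ≤ S₀) →
      ((S₀ ≤ LinearMap.ker e → ¬(S₀ = ⊥ ∧ S₁ = ⊥) →
          θ₀ * (finrank ℂ S₀ : ℝ) + θ₁ * (finrank ℂ S₁ : ℝ) < 0) ∧
       ((∀ q, LinearMap.range (f q) ≤ S₀) → ¬(S₀ = ⊤ ∧ S₁ = ⊤) →
          θ₀ * (finrank ℂ S₀ : ℝ) + θ₁ * (finrank ℂ S₁ : ℝ) < (θ₀ + θ₁) * c)) := by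
  have hθ : InChamber c θ₀ θ₁ := ⟨hθ₀, hθ₁, hθ₁'⟩
  intro S₀ S₁ hA₁ hA₂ hC
  obtain ⟨hker, hrange⟩ := hss S₀ S₁ hA₁ hA₂ hC
  exact ⟨fun he hne ↦ (hker he).lt_of_ne fun h ↦ hne (hθ.eq_bot_of_weight_eq_zero hV₁ h),
    fun hf hne ↦ (hrange hf).lt_of_ne fun h ↦ hne (hθ.eq_top_of_weight_eq hV₀ hV₁ h)⟩
end

section
/- (Wall claim in Remark 3.3) Let n ≥ 2 and c ≥ 1, and let θ̄ = (θ̄₀, θ̄₁) ∈ ℝ² lie on one of the open rays R₁ = {(θ₀,θ₁) : θ₀ > 0, θ₀ + θ₁ = 0} or R₂ = {(θ₀,θ₁) : θ₀ > 0, (c−1)θ₀ + cθ₁ = 0}. Then there exists a (c,c)-dimensional framed representation of Λ_n which is θ̄-semistable but not θ_c-semistable, where θ_c = (2c, 1−2c). -/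
/-!
On the ray `θ₀ + θ₁ = 0` take `A₁ = A₂ = id` and all other maps zero: every subrepresentation
has `S₀ ⊆ S₁`, which is all that θ̄-semistability asks there, while `(V₀, V₁)` itself
destabilises for `θ_c`.

On the ray `(c - 1) θ₀ + c θ₁ = 0` take `A₁` the projection killing `x₀`, `A₂` the shift,
`e = x₀` and `C = f = 0`. No nonzero shift-invariant subspace lies in `ker e`, and `A₁` is the
identity on `ker e`, so a nonzero `S₀ ∩ ker e` has dimension strictly below `dim S₁`. This gives
`c·dim S₀ + dim S₁ ≤ c·dim S₁` when `S₀ ⊆ ker e` and `≤ c + c·dim S₁` in general, which are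
exactly the two θ̄-semistability inequalities. The line through the first basis vector, with
`S₁ = 0`, destabilises for `θ_c`.
-/

open Module

theorem Submodule.finrank_le_finrank_inf_ker_add_one {K V : Type*} [Field K] [AddCommGroup V]
    [Module K V] [FiniteDimensional K V] (S : Submodule K V) (φ : Module.Dual K V) :
    finrank K S ≤ finrank K ↥(S ⊓ LinearMap.ker φ) + 1 := by
  rcases eq_or_ne φ 0 with rfl | hφ
  · rw [LinearMap.ker_zero, inf_top_eq]
    omega
  have hsum := Submodule.finrank_sup_add_finrank_inf_eq S (LinearMap.ker φ)
  have hker := Module.Dual.finrank_ker_add_one_of_ne_zero hφ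
  have hsup := Submodule.finrank_le (S ⊔ LinearMap.ker φ)
  omega

namespace FramedRep

variable {K : Type*} [Field K]

def IsSemistable {n c : ℕ} (θ₀ θ₁ : ℝ) (A₁ A₂ : (Fin c → K) →ₗ[K] (Fin c → K))
    (C : Fin n → ((Fin c → K) →ₗ[K] (Fin c → K))) (e : (Fin c → K) →ₗ[K] K)
    (f : Fin (n - 1) → (K →ₗ[K] (Fin c → K))) : Prop :=
  ∀ (S₀ S₁ : Submodule K (Fin c → K)),
    S₀.map A₁ ≤ S₁ → S₀.map A₂ ≤ S₁ → (∀ q : Fin n, S₁.map (C q) ≤ S₀) →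
    ((S₀ ≤ LinearMap.ker e → θ₀ * (finrank K S₀ : ℝ) + θ₁ * (finrank K S₁ : ℝ) ≤ 0) ∧
     ((∀ q, LinearMap.range (f q) ≤ S₀) →
        θ₀ * (finrank K S₀ : ℝ) + θ₁ * (finrank K S₁ : ℝ) ≤ (θ₀ + θ₁) * c))

section Identity

variable {n c : ℕ}

theorem isSemistable_id {θ₀ θ₁ : ℝ} (hθ₀ : 0 ≤ θ₀) (hθ : θ₀ + θ₁ = 0) :
    IsSemistable (K := K) (n := n) (c := c) θ₀ θ₁ LinearMap.id LinearMap.id 0 0 0 := by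
  intro S₀ S₁ hA _ _
  rw [Submodule.map_id] at hA
  have hle : (finrank K S₀ : ℝ) ≤ finrank K S₁ := by exact_mod_cast Submodule.finrank_mono hA
  have hθ₁ : θ₁ = -θ₀ := by linarith
  subst hθ₁
  constructor <;> intro _ <;> nlinarith

theorem not_isSemistable_id {θ₀ θ₁ : ℝ} (h : 0 < (θ₀ + θ₁) * c) :
    ¬ IsSemistable (K := K) (n := n) (c := c) θ₀ θ₁ LinearMap.id LinearMap.id 0 0 0 := by
  intro hss
  have := (hss ⊤ ⊤ le_top le_top fun _ => le_top).1 (by simp)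
  rw [finrank_top, Module.finrank_fin_fun] at this
  linarith

end Identity

section Shift

variable {c : ℕ}

/-- The nilpotent shift `(x₀, …, x_{c-1}) ↦ (x₁, …, x_{c-1}, 0)`. -/
noncomputable def shift : (Fin c → K) →ₗ[K] (Fin c → K) :=
  LinearMap.pi fun i => if h : i.1 + 1 < c then LinearMap.proj ⟨i.1 + 1, h⟩ else 0

theorem shift_apply_of_lt (x : Fin c → K) (i : Fin c) (h : i.1 + 1 < c) :
    shift x i = x ⟨i.1 + 1, h⟩ := by
  simp [shift, h]

variable [NeZero c]

noncomputable def dropFirst : (Fin c → K) →ₗ[K] (Fin c → K) :=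
  LinearMap.id - LinearMap.single K (fun _ => K) 0 ∘ₗ LinearMap.proj 0

theorem shift_single_zero (a : K) : shift (Pi.single (0 : Fin c) a) = 0 := by
  funext i
  by_cases h : i.1 + 1 < c
  · rw [shift_apply_of_lt _ _ h]
    exact Pi.single_eq_of_ne (Fin.ne_of_val_ne (Nat.succ_ne_zero i.1)) _
  · simp [shift, h]

theorem dropFirst_apply_of_eq_zero {x : Fin c → K} (hx : x 0 = 0) : dropFirst x = x := by
  simp [dropFirst, hx]

theorem dropFirst_single_zero (a : K) : dropFirst (Pi.single (0 : Fin c) a) = 0 := by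
  simp [dropFirst]

/-- The `j`-th coordinate of `x` is the `0`-th coordinate of `shift^j x`, so a
`shift`-invariant subspace on which `x₀` vanishes is zero. -/
theorem eq_bot_of_le_ker_of_map_shift_le {S : Submodule K (Fin c → K)}
    (hker : S ≤ LinearMap.ker (LinearMap.proj 0)) (hinv : S.map shift ≤ S) : S = ⊥ := by
  have hcoord : ∀ j : ℕ, ∀ x ∈ S, ∀ h : j < c, x ⟨j, h⟩ = 0 := by
    intro j
    induction j with
    | zero => exact fun x hx _ => hker hx
    | succ j ih =>
      intro x hx h
      rw [← shift_apply_of_lt x ⟨j, by omega⟩ h]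
      exact ih _ (hinv ⟨x, hx, rfl⟩) _
  refine (Submodule.eq_bot_iff S).2 fun x hx => funext fun i => hcoord i.1 x hx i.2

theorem finrank_inf_ker_lt {S₀ S₁ : Submodule K (Fin c → K)}
    (hA₁ : S₀.map dropFirst ≤ S₁) (hA₂ : S₀.map shift ≤ S₁)
    (hne : S₀ ⊓ LinearMap.ker (LinearMap.proj 0) ≠ ⊥) :
    finrank K ↥(S₀ ⊓ LinearMap.ker (LinearMap.proj 0)) < finrank K S₁ := by
  set S := S₀ ⊓ LinearMap.ker (LinearMap.proj (R := K) (φ := fun _ : Fin c => K) 0)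
  have hS : S ≤ S₁ := fun x hx =>
    dropFirst_apply_of_eq_zero (K := K) hx.2 ▸ hA₁ ⟨x, hx.1, rfl⟩
  have hNS : S.map shift ≤ S₁ := (Submodule.map_mono inf_le_left).trans hA₂
  have hlt : S < S ⊔ S.map shift := left_lt_sup.2 fun h =>
    hne (eq_bot_of_le_ker_of_map_shift_le inf_le_right h)
  exact (Submodule.finrank_lt_finrank_of_lt hlt).trans_le
    (Submodule.finrank_mono (sup_le hS hNS))

theorem mul_finrank_add_finrank_le_of_le_ker {S₀ S₁ : Submodule K (Fin c → K)}
    (hA₁ : S₀.map dropFirst ≤ S₁) (hA₂ : S₀.map shift ≤ S₁)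
    (hker : S₀ ≤ LinearMap.ker (LinearMap.proj 0)) :
    c * finrank K S₀ + finrank K S₁ ≤ c * finrank K S₁ := by
  have hc := NeZero.pos c
  rcases eq_or_ne S₀ ⊥ with rfl | hne
  · simpa using Nat.le_mul_of_pos_left _ hc
  have hinf : S₀ ⊓ LinearMap.ker (LinearMap.proj 0) = S₀ := inf_eq_left.2 hker
  have hlt := finrank_inf_ker_lt hA₁ hA₂ (by rwa [hinf])
  rw [hinf] at hlt
  have hne_top : S₀ ≠ ⊤ := fun h => by
    have hmem : Pi.single (0 : Fin c) (1 : K) ∈ S₀ := h ▸ Submodule.mem_top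
    simpa [LinearMap.mem_ker] using hker hmem
  have hS₀c : finrank K S₀ < c := by simpa using Submodule.finrank_lt hne_top
  nlinarith

theorem mul_finrank_add_finrank_le {S₀ S₁ : Submodule K (Fin c → K)}
    (hA₁ : S₀.map dropFirst ≤ S₁) (hA₂ : S₀.map shift ≤ S₁) :
    c * finrank K S₀ + finrank K S₁ ≤ c + c * finrank K S₁ := by
  have hS₁c : finrank K S₁ ≤ c := by simpa using Submodule.finrank_le S₁
  have hinf := Submodule.finrank_le_finrank_inf_ker_add_one S₀ (LinearMap.proj (0 : Fin c))
  rcases eq_or_ne (S₀ ⊓ LinearMap.ker (LinearMap.proj 0)) ⊥ with hbot | hne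
  · rw [hbot, finrank_bot] at hinf
    have := Nat.mul_le_mul_left c hinf
    have := Nat.le_mul_of_pos_left (finrank K S₁) (NeZero.pos c)
    omega
  · have hlt := finrank_inf_ker_lt hA₁ hA₂ hne
    have := Nat.mul_le_mul_left c (show finrank K S₀ ≤ finrank K S₁ by omega)
    omega

theorem isSemistable_dropFirst_shift {n : ℕ} {θ₀ θ₁ : ℝ} (hθ₀ : 0 ≤ θ₀)
    (hθ : ((c : ℝ) - 1) * θ₀ + c * θ₁ = 0) :
    IsSemistable (K := K) (n := n) θ₀ θ₁ dropFirst shift 0 (LinearMap.proj (0 : Fin c)) 0 := by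
  intro S₀ S₁ hA₁ hA₂ _
  have hc : (0 : ℝ) < c := by exact_mod_cast NeZero.pos c
  have hscale : (c : ℝ) * (θ₀ * finrank K S₀ + θ₁ * finrank K S₁) =
      θ₀ * (c * finrank K S₀ + finrank K S₁ - c * finrank K S₁) := by
    linear_combination (finrank K S₁ : ℝ) * hθ
  constructor
  · intro hker
    have hdim : (c * finrank K S₀ + finrank K S₁ : ℝ) ≤ c * finrank K S₁ := by
      exact_mod_cast mul_finrank_add_finrank_le_of_le_ker hA₁ hA₂ hker
    nlinarith
  · intro _
    have hdim : (c * finrank K S₀ + finrank K S₁ : ℝ) ≤ c + c * finrank K S₁ := by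
      exact_mod_cast mul_finrank_add_finrank_le hA₁ hA₂
    have hθc : (c : ℝ) * ((θ₀ + θ₁) * c) = θ₀ * c := by linear_combination (c : ℝ) * hθ
    nlinarith

theorem not_isSemistable_dropFirst_shift {n : ℕ} {θ₀ θ₁ : ℝ} (h : (θ₀ + θ₁) * c < θ₀) :
    ¬ IsSemistable (K := K) (n := n) θ₀ θ₁ dropFirst shift 0 (LinearMap.proj (0 : Fin c)) 0 := by
  intro hss
  set v : Fin c → K := Pi.single 0 1
  have hv : v ≠ 0 := Pi.single_ne_zero_iff.2 one_ne_zero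
  have hmap : ∀ A : (Fin c → K) →ₗ[K] (Fin c → K), A v = 0 → (K ∙ v).map A ≤ ⊥ :=
    fun A hA => (Submodule.map_span_le _ _ _).2 (by simpa using hA)
  have := (hss (K ∙ v) ⊥ (hmap _ (dropFirst_single_zero 1)) (hmap _ (shift_single_zero 1))
    (by simp)).2 (by simp)
  rw [finrank_span_singleton hv, finrank_bot] at this
  push_cast at this
  linarith

end Shift

end FramedRep

open FramedRep in
/-- (Wall claim in Remark 3.3) For θ̄ on one of the open rays R₁, R₂ bounding the
chamber Γ_c, there exists a (c,c)-dimensional framed representation of Λ_n which is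
θ̄-semistable but not θ_c-semistable, where θ_c = (2c, 1−2c). Here we take
V₀ = V₁ = ℂ^c and W = ℂ. -/
theorem stmt_15 (n c : ℕ) (hc : 1 ≤ c)
    (θ₀ θ₁ : ℝ)
    (hwall : (0 < θ₀ ∧ θ₀ + θ₁ = 0) ∨ (0 < θ₀ ∧ ((c : ℝ) - 1) * θ₀ + (c : ℝ) * θ₁ = 0)) :
    ∃ (A₁ A₂ : (Fin c → ℂ) →ₗ[ℂ] (Fin c → ℂ))
      (C : Fin n → ((Fin c → ℂ) →ₗ[ℂ] (Fin c → ℂ)))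
      (e : (Fin c → ℂ) →ₗ[ℂ] ℂ) (f : Fin (n - 1) → (ℂ →ₗ[ℂ] (Fin c → ℂ))),
      -- the relations (Q1)
      (∀ q : Fin (n - 1),
        A₂ ∘ₗ C ⟨q.1 + 1, by have := q.2; omega⟩ = A₁ ∘ₗ C ⟨q.1, by have := q.2; omega⟩) ∧
      (∀ q : Fin (n - 1),
        C ⟨q.1 + 1, by have := q.2; omega⟩ ∘ₗ A₂ =
          C ⟨q.1, by have := q.2; omega⟩ ∘ₗ A₁ + f q ∘ₗ e) ∧
      -- θ̄-semistable
      (∀ (S₀ S₁ : Submodule ℂ (Fin c → ℂ)),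
        S₀.map A₁ ≤ S₁ → S₀.map A₂ ≤ S₁ →
        (∀ q : Fin n, S₁.map (C q) ≤ S₀) →
        ((S₀ ≤ LinearMap.ker e →
            θ₀ * (finrank ℂ S₀ : ℝ) + θ₁ * (finrank ℂ S₁ : ℝ) ≤ 0) ∧
         ((∀ q, LinearMap.range (f q) ≤ S₀) →
            θ₀ * (finrank ℂ S₀ : ℝ) + θ₁ * (finrank ℂ S₁ : ℝ) ≤ (θ₀ + θ₁) * c))) ∧
      -- but not θ_c-semistable
      ¬(∀ (S₀ S₁ : Submodule ℂ (Fin c → ℂ)),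
        S₀.map A₁ ≤ S₁ → S₀.map A₂ ≤ S₁ →
        (∀ q : Fin n, S₁.map (C q) ≤ S₀) →
        ((S₀ ≤ LinearMap.ker e →
            (2 * c : ℝ) * (finrank ℂ S₀ : ℝ) + (1 - 2 * c) * (finrank ℂ S₁ : ℝ) ≤ 0) ∧
         ((∀ q, LinearMap.range (f q) ≤ S₀) →
            (2 * c : ℝ) * (finrank ℂ S₀ : ℝ) + (1 - 2 * c) * (finrank ℂ S₁ : ℝ) ≤
              ((2 * c : ℝ) + (1 - 2 * c)) * c))) := by
  have : NeZero c := ⟨by omega⟩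
  have hθc : ((2 * c : ℝ) + (1 - 2 * c)) * c = c := by ring
  have hc_pos : (0 : ℝ) < c := by exact_mod_cast hc
  rcases hwall with ⟨hθ₀, hθ⟩ | ⟨hθ₀, hθ⟩
  · exact ⟨LinearMap.id, LinearMap.id, 0, 0, 0, by simp, by simp,
      isSemistable_id hθ₀.le hθ, not_isSemistable_id (by rwa [hθc])⟩
  · exact ⟨dropFirst, shift, 0, LinearMap.proj 0, 0, by simp, by simp,
      isSemistable_dropFirst_shift hθ₀.le hθ, not_isSemistable_dropFirst_shift (by linarith)⟩
end
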